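/- arXiv:2009.13470 — 2 statements merged into one kernel-verified Lean document; each statement's English description precedes it below -/
import Mathlib

section
/- (Proposition 2.2) Problem (P) has at least one solution: there exists a pair (l_A*, l_I*) ∈ [0,1]×[0,1] whose associated SAILR state satisfies 0 ≤ L(t) ≤ L̂ on [0,T] and which minimizes the cost J(l_A,l_I) over all admissible pairs. -/
set_option maxHeartbeats 1000000


open MeasureTheory Set Filter Topology intervalIntegral
open scoped NNReal

noncomputable section

/-- Right-hand side of the `S` equation of the SAILR system. -/
def dS (bI bA xi : ℝ → ℝ) (S A I R : ℝ → ℝ) : ℝ → ℝ :=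
  fun t => -(bI t * S t * I t) - bA t * S t * A t + xi t * R t

/-- Right-hand side of the `A` equation of the SAILR system. -/
def dA (bI bA : ℝ → ℝ) (σ μA lA : ℝ) (S A I : ℝ → ℝ) : ℝ → ℝ :=
  fun t => bI t * S t * I t + bA t * S t * A t - (σ + μA + lA) * A t

/-- Right-hand side of the `I` equation of the SAILR system. -/
def dI (σ μI lI : ℝ) (A I : ℝ → ℝ) : ℝ → ℝ :=
  fun t => σ * A t - (μI + lI) * I t

/-- Right-hand side of the `L` equation of the SAILR system. -/
def dL (μL lA lI : ℝ) (A I L : ℝ → ℝ) : ℝ → ℝ :=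
  fun t => lA * A t + lI * I t - μL * L t

/-- Right-hand side of the `R` equation of the SAILR system. -/
def dR (xi : ℝ → ℝ) (μA μI μL : ℝ) (A I L R : ℝ → ℝ) : ℝ → ℝ :=
  fun t => μA * A t + μI * I t + μL * L t - xi t * R t

/-- `(S,A,I,L,R)` is an (absolutely continuous) solution of the SAILR system on `[0,T]`,
written in the equivalent integral form. -/
structure IsSAILRSolution (T : ℝ) (bI bA xi : ℝ → ℝ) (σ μA μI μL lA lI : ℝ)
    (S0 A0 I0 L0 R0 : ℝ) (S A I L R : ℝ → ℝ) : Prop where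
  contS : ContinuousOn S (Icc 0 T)
  contA : ContinuousOn A (Icc 0 T)
  contI : ContinuousOn I (Icc 0 T)
  contL : ContinuousOn L (Icc 0 T)
  contR : ContinuousOn R (Icc 0 T)
  intS : IntegrableOn (dS bI bA xi S A I R) (Icc 0 T)
  intA : IntegrableOn (dA bI bA σ μA lA S A I) (Icc 0 T)
  intI : IntegrableOn (dI σ μI lI A I) (Icc 0 T)
  intL : IntegrableOn (dL μL lA lI A I L) (Icc 0 T)
  intR : IntegrableOn (dR xi μA μI μL A I L R) (Icc 0 T)
  eqS : ∀ t ∈ Icc (0:ℝ) T, S t = S0 + ∫ s in (0:ℝ)..t, dS bI bA xi S A I R s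
  eqA : ∀ t ∈ Icc (0:ℝ) T, A t = A0 + ∫ s in (0:ℝ)..t, dA bI bA σ μA lA S A I s
  eqI : ∀ t ∈ Icc (0:ℝ) T, I t = I0 + ∫ s in (0:ℝ)..t, dI σ μI lI A I s
  eqL : ∀ t ∈ Icc (0:ℝ) T, L t = L0 + ∫ s in (0:ℝ)..t, dL μL lA lI A I L s
  eqR : ∀ t ∈ Icc (0:ℝ) T, R t = R0 + ∫ s in (0:ℝ)..t, dR xi μA μI μL A I L R s

/-- The rates `β_I, β_A, ξ` are measurable, essentially bounded (`L^∞`) and nonnegative. -/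
def RatesOK (bI bA xi : ℝ → ℝ) : Prop :=
  Measurable bI ∧ Measurable bA ∧ Measurable xi ∧
    (∃ C : ℝ, ∀ t, |bI t| ≤ C ∧ |bA t| ≤ C ∧ |xi t| ≤ C) ∧
    (∀ᵐ t : ℝ, 0 ≤ t → 0 ≤ bI t ∧ 0 ≤ bA t ∧ 0 ≤ xi t)

/-- The cost functional of problem `(P)`. -/
def costP (T α0 α1 lA lI : ℝ) (A I : ℝ → ℝ) : ℝ :=
  α0 / 2 * ∫ t in (0:ℝ)..T, (A t) ^ 2 + α0 / 2 * ∫ t in (0:ℝ)..T, (I t) ^ 2 +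
    α1 / 2 * (lA ^ 2 + lI ^ 2)

/-- Admissibility for problem `(P)`: controls in `[0,1]`, the state solves the SAILR system,
and the state constraint `0 ≤ L(t) ≤ L̂` holds on `[0,T]`. -/
def AdmissibleP (T : ℝ) (bI bA xi : ℝ → ℝ) (σ μA μI μL : ℝ)
    (S0 A0 I0 L0 R0 Lhat : ℝ) (lA lI : ℝ) (S A I L R : ℝ → ℝ) : Prop :=
  lA ∈ Icc (0:ℝ) 1 ∧ lI ∈ Icc (0:ℝ) 1 ∧
    IsSAILRSolution T bI bA xi σ μA μI μL lA lI S0 A0 I0 L0 R0 S A I L R ∧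
    ∀ t ∈ Icc (0:ℝ) T, 0 ≤ L t ∧ L t ≤ Lhat
lemma ii_of_Icc {g : ℝ → ℝ} {T a b : ℝ} (hg : IntegrableOn g (Icc 0 T))
    (ha : a ∈ Icc 0 T) (hb : b ∈ Icc 0 T) : IntervalIntegrable g volume a b := by
  rw [intervalIntegrable_iff]
  exact hg.mono_set fun x hx =>
    ⟨le_trans (le_min ha.1 hb.1) (le_of_lt hx.1), le_trans hx.2 (max_le ha.2 hb.2)⟩

lemma primitive_sub {g : ℝ → ℝ} {T a b : ℝ} (hg : IntegrableOn g (Icc 0 T))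
    (ha : a ∈ Icc 0 T) (hb : b ∈ Icc 0 T) :
    (∫ s in (0:ℝ)..b, g s) - ∫ s in (0:ℝ)..a, g s = ∫ s in a..b, g s := by
  have h0 : (0:ℝ) ∈ Icc 0 T := ⟨le_refl 0, le_trans ha.1 ha.2⟩
  have := intervalIntegral.integral_add_adjacent_intervals
    (ii_of_Icc hg h0 ha) (ii_of_Icc hg ha hb)
  linarith [this]

lemma int_cpow (c : ℝ) (k : ℕ) (t : ℝ) :
    (∫ s in (0:ℝ)..t, c * s^k) = c * t^(k+1)/(k+1) := by
  rw [intervalIntegral.integral_const_mul, integral_pow]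
  push_cast; ring

lemma int_exp_mul {b : ℝ} (hb : 0 < b) (t : ℝ) :
    (∫ s in (0:ℝ)..t, b * Real.exp (b * s)) = Real.exp (b * t) - 1 := by
  have : (∫ s in (0:ℝ)..t, Real.exp (b * s)) = b⁻¹ • ∫ s in (0:ℝ)..(b*t), Real.exp s := by
    simpa using intervalIntegral.integral_comp_mul_left (fun s => Real.exp s) (ne_of_gt hb) (a := (0:ℝ)) (b := t)
  rw [intervalIntegral.integral_const_mul, this, integral_exp]
  simp only [smul_eq_mul, Real.exp_zero]
  rw [← mul_assoc, mul_inv_cancel₀ hb.ne', one_mul]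

/-- Gronwall, integral form, proved by iteration (no derivatives). -/
lemma gronwall_int {T a b : ℝ} (hT : 0 ≤ T) (ha : 0 ≤ a) (hb : 0 ≤ b) {v : ℝ → ℝ}
    (hv : ContinuousOn v (Icc 0 T))
    (h : ∀ t ∈ Icc (0:ℝ) T, v t ≤ a + b * ∫ s in (0:ℝ)..t, v s) :
    ∀ t ∈ Icc (0:ℝ) T, v t ≤ a * Real.exp (b * t) := by
  rcases eq_or_lt_of_le hb with hb0 | hbpos
  · intro t ht
    have := h t ht
    rw [← hb0] at this ⊢
    simpa using this
  obtain ⟨M, hM⟩ : ∃ M, ∀ t ∈ Icc (0:ℝ) T, v t ≤ M := by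
    obtain ⟨M, hM⟩ := (isCompact_Icc.image_of_continuousOn hv).bddAbove
    exact ⟨M, fun t ht => hM ⟨t, ht, rfl⟩⟩
  have hvi : IntegrableOn v (Icc 0 T) := hv.integrableOn_compact isCompact_Icc
  have key : ∀ n : ℕ, ∀ t ∈ Icc (0:ℝ) T,
      v t ≤ a * Real.exp (b * t) + M * ((b*t)^n / (Nat.factorial n)) := by
    intro n
    induction n with
    | zero =>
      intro t ht
      have := hM t ht
      have h2 : 0 ≤ a * Real.exp (b * t) := by positivity
      simpa using by linarith
    | succ n ih =>
      intro t ht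
      have hbt : ∀ s ∈ Icc (0:ℝ) t, s ∈ Icc (0:ℝ) T :=
        fun s hs => ⟨hs.1, le_trans hs.2 ht.2⟩
      have hmono : (∫ s in (0:ℝ)..t, v s) ≤
          ∫ s in (0:ℝ)..t, (a * Real.exp (b * s) + (M * b^n / (Nat.factorial n)) * s^n) := by
        apply intervalIntegral.integral_mono_on ht.1
          (ii_of_Icc hvi ⟨le_refl 0, hT⟩ ht)
        · exact ((continuous_const.mul (Real.continuous_exp.comp (continuous_const.mul continuous_id))).add (continuous_const.mul (continuous_pow n))).intervalIntegrable _ _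
        · intro s hs
          have h1 := ih s (hbt s hs)
          have hfact : M * ((b * s) ^ n / ↑(Nat.factorial n)) = M * b^n / (Nat.factorial n) * s^n := by
            rw [mul_pow]; ring
          linarith [hfact]
      have hca : (∫ s in (0:ℝ)..t, (a * Real.exp (b * s) + (M * b^n / (Nat.factorial n)) * s^n))
          = (a/b) * (Real.exp (b*t) - 1) + (M * b^n / (Nat.factorial n)) * t^(n+1)/(n+1) := by
        rw [intervalIntegral.integral_add, ← int_cpow]
        · congr 1
          rw [show (fun s => a * Real.exp (b*s)) = fun s => (a/b) * (b * Real.exp (b*s)) by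
              funext s; field_simp]
          rw [intervalIntegral.integral_const_mul, int_exp_mul hbpos]
        · exact (continuous_const.mul (Real.continuous_exp.comp (continuous_const.mul continuous_id))).intervalIntegrable _ _
        · exact (continuous_const.mul (continuous_pow n)).intervalIntegrable _ _
      have := h t ht
      have hfin : a + b * ((a/b) * (Real.exp (b*t) - 1) + (M * b^n / (Nat.factorial n)) * t^(n+1)/(n+1))
          = a * Real.exp (b*t) + M * ((b*t)^(n+1) / (Nat.factorial (n+1))) := by
        rw [Nat.factorial_succ, mul_pow]
        push_cast
        field_simp
        ring
      have hble : b * (∫ s in (0:ℝ)..t, v s) ≤ b * ((a/b) * (Real.exp (b*t) - 1) + (M * b^n / (Nat.factorial n)) * t^(n+1)/(n+1)) := by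
        apply mul_le_mul_of_nonneg_left _ hb
        rw [← hca]; exact hmono
      linarith [hfin ▸ (by linarith : v t ≤ a + b * ((a/b) * (Real.exp (b*t) - 1) + (M * b^n / (Nat.factorial n)) * t^(n+1)/(n+1)))]
  intro t ht
  have hlim : Tendsto (fun n : ℕ => M * ((b*t)^n / (Nat.factorial n))) atTop (nhds 0) := by
    have := FloorSemiring.tendsto_pow_div_factorial_atTop (b*t)
    simpa using this.const_mul M
  have hge : ∀ n, v t - a * Real.exp (b * t) ≤ M * ((b*t)^n / (Nat.factorial n)) := by
    intro n; linarith [key n t ht]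
  have := ge_of_tendsto' hlim hge
  linarith


lemma ii_of_Icc' {g : ℝ → ℝ} {T a b : ℝ} (hg : IntegrableOn g (Icc 0 T))
    (ha : a ∈ Icc 0 T) (hb : b ∈ Icc 0 T) : IntervalIntegrable g volume a b := by
  rw [intervalIntegrable_iff]
  exact hg.mono_set fun x hx =>
    ⟨le_trans (le_min ha.1 hb.1) (le_of_lt hx.1), le_trans hx.2 (max_le ha.2 hb.2)⟩

/-- If `w` solves `w t = w 0 + ∫₀ᵗ g` with `w 0 ≥ 0` and `g ≥ 0` a.e. wherever `w < 0`,
then `w ≥ 0` on `[0,T]`. -/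
lemma nonneg_of_IntEq {T w0 : ℝ} {w g : ℝ → ℝ} (hT : 0 ≤ T)
    (hw : ContinuousOn w (Icc 0 T)) (hg : IntegrableOn g (Icc 0 T))
    (h0 : 0 ≤ w0)
    (heq : ∀ t ∈ Icc (0:ℝ) T, w t = w0 + ∫ s in (0:ℝ)..t, g s)
    (hpos : ∀ᵐ s ∂volume, s ∈ Icc (0:ℝ) T → w s < 0 → 0 ≤ g s) :
    ∀ t ∈ Icc (0:ℝ) T, 0 ≤ w t := by
  intro t ht
  by_contra hneg
  push_neg at hneg
  set Z : Set ℝ := {s ∈ Icc (0:ℝ) t | 0 ≤ w s} with hZ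
  have hsub : Icc (0:ℝ) t ⊆ Icc 0 T := Icc_subset_Icc le_rfl ht.2
  have hZne : Z.Nonempty := ⟨0, ⟨le_refl 0, ht.1⟩, by
    rw [heq 0 ⟨le_refl 0, hT⟩]; simpa using h0⟩
  have hZc : IsClosed Z := by
    have : Z = Icc 0 t ∩ w ⁻¹' (Ici 0) := by
      ext s; exact ⟨fun h => ⟨h.1, h.2⟩, fun h => ⟨h.1, h.2⟩⟩
    rw [this]
    exact ContinuousOn.preimage_isClosed_of_isClosed (hw.mono hsub) isClosed_Icc isClosed_Ici
  have hZb : BddAbove Z := ⟨t, fun s hs => hs.1.2⟩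
  set τ := sSup Z with hτ
  have hτZ : τ ∈ Z := hZc.csSup_mem hZne hZb
  have hτt : τ ≤ t := hτZ.1.2
  have hτ0 : 0 ≤ τ := hτZ.1.1
  have hτlt : τ < t := lt_of_le_of_ne hτt (by
    intro hE; rw [hE] at hτZ; exact absurd hτZ.2 (not_le.2 hneg))
  have hwneg : ∀ s, τ < s → s ≤ t → w s < 0 := by
    intro s hs1 hs2
    by_contra hc
    push_neg at hc
    exact absurd (le_csSup hZb (⟨⟨le_trans hτ0 hs1.le, hs2⟩, hc⟩ : s ∈ Z)) (not_le.2 hs1)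
  -- w t = w τ + ∫ τ..t g
  have hτI : τ ∈ Icc (0:ℝ) T := hsub hτZ.1
  have htI : t ∈ Icc (0:ℝ) T := ht
  have hdiff : w t - w τ = ∫ s in τ..t, g s := by
    rw [heq t htI, heq τ hτI]
    have h0' : (0:ℝ) ∈ Icc 0 T := ⟨le_refl 0, hT⟩
    have := intervalIntegral.integral_add_adjacent_intervals
      (ii_of_Icc' hg h0' hτI) (ii_of_Icc' hg hτI htI)
    linarith
  have hint : 0 ≤ ∫ s in τ..t, g s := by
    rw [intervalIntegral.integral_of_le hτlt.le]
    apply setIntegral_nonneg_ae measurableSet_Ioc (by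
      filter_upwards [hpos] with s hs
      intro hmem
      exact hs (hsub ⟨le_trans hτ0 hmem.1.le, hmem.2⟩) (hwneg s hmem.1 hmem.2))
  have : 0 ≤ w t := by
    have := hτZ.2; linarith
  exact absurd this (not_le.2 hneg)


def clampB (B x : ℝ) : ℝ := min B (max x 0)

lemma clampB_nonneg {B x : ℝ} (hB : 0 ≤ B) : 0 ≤ clampB B x :=
  le_min hB (le_max_right x 0)

lemma clampB_le {B x : ℝ} : clampB B x ≤ B := min_le_left _ _

lemma clampB_abs_le {B x : ℝ} (hB : 0 ≤ B) : |clampB B x| ≤ B := by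
  rw [abs_le]; exact ⟨le_trans (by linarith) (clampB_nonneg hB), clampB_le⟩

lemma clampB_eq {B x : ℝ} (h0 : 0 ≤ x) (h1 : x ≤ B) : clampB B x = x := by
  simp [clampB, max_eq_left h0, min_eq_right h1]

lemma clampB_of_neg {B x : ℝ} (hB : 0 ≤ B) (h : x < 0) : clampB B x = 0 := by
  simp [clampB, max_eq_right h.le, min_eq_right hB]

lemma clampB_lip {B x y : ℝ} : |clampB B x - clampB B y| ≤ |x - y| := by
  simp only [clampB, min_def, max_def]
  split_ifs <;> rw [abs_sub_le_iff] <;> constructor <;>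
    linarith [le_abs_self (x - y), neg_abs_le (x - y)]

lemma prod_diff_le {p a b a' b' M P : ℝ} (hM : 0 ≤ M) (hP : |p| ≤ P)
    (ha : |a| ≤ M) (hb' : |b'| ≤ M) :
    |p * a * b - p * a' * b'| ≤ P * M * (|a - a'| + |b - b'|) := by
  have h : p * a * b - p * a' * b' = p * (a * (b - b') + b' * (a - a')) := by ring
  rw [h, abs_mul]
  have h2 : |a * (b - b') + b' * (a - a')| ≤ M * (|a - a'| + |b - b'|) := by
    calc |a * (b - b') + b' * (a - a')| ≤ |a * (b - b')| + |b' * (a - a')| := abs_add_le _ _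
      _ = |a| * |b - b'| + |b'| * |a - a'| := by rw [abs_mul, abs_mul]
      _ ≤ M * (|a - a'| + |b - b'|) := by
          nlinarith [abs_nonneg (b - b'), abs_nonneg (a - a'), abs_nonneg a, abs_nonneg b']
  calc |p| * |a * (b - b') + b' * (a - a')| ≤ P * (M * (|a - a'| + |b - b'|)) :=
        mul_le_mul hP h2 (abs_nonneg _) (le_trans (abs_nonneg p) hP)
    _ = P * M * (|a - a'| + |b - b'|) := by ring

/-- clamped SAILR vector field -/
def Fpic (bI bA xi : ℝ → ℝ) (σ μA μI μL lA lI B : ℝ) (s : ℝ) (x : Fin 5 → ℝ) : Fin 5 → ℝ :=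
  ![ -(bI s * clampB B (x 0) * clampB B (x 2)) - bA s * clampB B (x 0) * clampB B (x 1)
       + xi s * clampB B (x 4),
     bI s * clampB B (x 0) * clampB B (x 2) + bA s * clampB B (x 0) * clampB B (x 1)
       - (σ + μA + lA) * clampB B (x 1),
     σ * clampB B (x 1) - (μI + lI) * clampB B (x 2),
     lA * clampB B (x 1) + lI * clampB B (x 2) - μL * clampB B (x 3),
     μA * clampB B (x 1) + μI * clampB B (x 2) + μL * clampB B (x 3) - xi s * clampB B (x 4) ]

section FpicLemmas
variable {bI bA xi : ℝ → ℝ} {σ μA μI μL lA lI B Cb : ℝ} {s : ℝ} {x : Fin 5 → ℝ}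

lemma Fpic_c0 : Fpic bI bA xi σ μA μI μL lA lI B s x 0 =
    -(bI s * clampB B (x 0) * clampB B (x 2)) - bA s * clampB B (x 0) * clampB B (x 1)
       + xi s * clampB B (x 4) := rfl
lemma Fpic_c1 : Fpic bI bA xi σ μA μI μL lA lI B s x 1 =
    bI s * clampB B (x 0) * clampB B (x 2) + bA s * clampB B (x 0) * clampB B (x 1)
       - (σ + μA + lA) * clampB B (x 1) := rfl
lemma Fpic_c2 : Fpic bI bA xi σ μA μI μL lA lI B s x 2 =
    σ * clampB B (x 1) - (μI + lI) * clampB B (x 2) := rfl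
lemma Fpic_c3 : Fpic bI bA xi σ μA μI μL lA lI B s x 3 =
    lA * clampB B (x 1) + lI * clampB B (x 2) - μL * clampB B (x 3) := rfl
lemma Fpic_c4 : Fpic bI bA xi σ μA μI μL lA lI B s x 4 =
    μA * clampB B (x 1) + μI * clampB B (x 2) + μL * clampB B (x 3) - xi s * clampB B (x 4) := rfl

lemma Fpic_sum :
    Fpic bI bA xi σ μA μI μL lA lI B s x 0 + Fpic bI bA xi σ μA μI μL lA lI B s x 1 +
    Fpic bI bA xi σ μA μI μL lA lI B s x 2 + Fpic bI bA xi σ μA μI μL lA lI B s x 3 +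
    Fpic bI bA xi σ μA μI μL lA lI B s x 4 = 0 := by
  rw [Fpic_c0, Fpic_c1, Fpic_c2, Fpic_c3, Fpic_c4]; ring

lemma Fpic_nonneg_of_neg (hB : 0 ≤ B) (hσ : 0 ≤ σ) (hμA : 0 ≤ μA) (hμI : 0 ≤ μI)
    (hμL : 0 ≤ μL) (hlA : 0 ≤ lA) (hlI : 0 ≤ lI)
    (hbI : 0 ≤ bI s) (hbA : 0 ≤ bA s) (hxi : 0 ≤ xi s)
    (i : Fin 5) (hx : x i < 0) :
    0 ≤ Fpic bI bA xi σ μA μI μL lA lI B s x i := by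
  have hc : ∀ j, 0 ≤ clampB B (x j) := fun _ => clampB_nonneg hB
  have key : ∀ j, x j < 0 → clampB B (x j) = 0 := fun j hj => clampB_of_neg hB hj
  have m01 := mul_nonneg (mul_nonneg hbI (hc 0)) (hc 2)
  have m02 := mul_nonneg (mul_nonneg hbA (hc 0)) (hc 1)
  have m03 := mul_nonneg hxi (hc 4)
  have m1 := mul_nonneg hσ (hc 1)
  have m2 := mul_nonneg hlA (hc 1)
  have m3 := mul_nonneg hlI (hc 2)
  have m4 := mul_nonneg hμA (hc 1)
  have m5 := mul_nonneg hμI (hc 2)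
  have m6 := mul_nonneg hμL (hc 3)
  fin_cases i
  · have h0 : x 0 < 0 := hx
    rw [show Fpic bI bA xi σ μA μI μL lA lI B s x ⟨0, by norm_num⟩
        = Fpic bI bA xi σ μA μI μL lA lI B s x 0 from rfl, Fpic_c0, key 0 h0]
    linarith [m03]
  · have h0 : x 1 < 0 := hx
    rw [show Fpic bI bA xi σ μA μI μL lA lI B s x ⟨1, by norm_num⟩
        = Fpic bI bA xi σ μA μI μL lA lI B s x 1 from rfl, Fpic_c1, key 1 h0]
    linarith [m01, m02]
  · have h0 : x 2 < 0 := hx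
    rw [show Fpic bI bA xi σ μA μI μL lA lI B s x ⟨2, by norm_num⟩
        = Fpic bI bA xi σ μA μI μL lA lI B s x 2 from rfl, Fpic_c2, key 2 h0]
    linarith [m1]
  · have h0 : x 3 < 0 := hx
    rw [show Fpic bI bA xi σ μA μI μL lA lI B s x ⟨3, by norm_num⟩
        = Fpic bI bA xi σ μA μI μL lA lI B s x 3 from rfl, Fpic_c3, key 3 h0]
    linarith [m2, m3]
  · have h0 : x 4 < 0 := hx
    rw [show Fpic bI bA xi σ μA μI μL lA lI B s x ⟨4, by norm_num⟩
        = Fpic bI bA xi σ μA μI μL lA lI B s x 4 from rfl, Fpic_c4, key 4 h0]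
    linarith [m4, m5, m6]

/-- global bound -/
lemma Fpic_bound (hB : 0 ≤ B) (hσ : 0 ≤ σ) (hμA : 0 ≤ μA) (hμI : 0 ≤ μI)
    (hμL : 0 ≤ μL) (hlA : lA ∈ Icc (0:ℝ) 1) (hlI : lI ∈ Icc (0:ℝ) 1)
    (hbI : |bI s| ≤ Cb) (hbA : |bA s| ≤ Cb) (hxi : |xi s| ≤ Cb)
    (i : Fin 5) :
    |Fpic bI bA xi σ μA μI μL lA lI B s x i| ≤ 2*Cb*B^2 + Cb*B + (σ+μA+μI+μL+3)*B := by
  have hCb : 0 ≤ Cb := le_trans (abs_nonneg _) hbI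
  have hc : ∀ j, |clampB B (x j)| ≤ B := fun _ => clampB_abs_le hB
  have hm : ∀ (p : ℝ) (j k : Fin 5), |p| ≤ Cb → |p * clampB B (x j) * clampB B (x k)| ≤ Cb * B^2 := by
    intro p j k hp
    rw [abs_mul, abs_mul]
    calc |p| * |clampB B (x j)| * |clampB B (x k)| ≤ Cb * B * B := by
          apply mul_le_mul (mul_le_mul hp (hc j) (abs_nonneg _) hCb) (hc k) (abs_nonneg _)
            (mul_nonneg hCb hB)
      _ = Cb * B^2 := by ring
  have hs : ∀ (c : ℝ) (j : Fin 5), 0 ≤ c → |c * clampB B (x j)| ≤ c * B := by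
    intro c j hcc
    rw [abs_mul, abs_of_nonneg hcc]
    exact mul_le_mul_of_nonneg_left (hc j) hcc
  have hx1 : ∀ j, |xi s * clampB B (x j)| ≤ Cb * B := by
    intro j
    rw [abs_mul]
    exact mul_le_mul hxi (hc j) (abs_nonneg _) hCb
  fin_cases i
  · rw [show Fpic bI bA xi σ μA μI μL lA lI B s x ⟨0, by norm_num⟩
        = Fpic bI bA xi σ μA μI μL lA lI B s x 0 from rfl, Fpic_c0]
    have h1 := hm (bI s) 0 2 hbI
    have h2 := hm (bA s) 0 1 hbA
    have h3 := hx1 4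
    rw [abs_le] at h1 h2 h3 ⊢
    constructor <;> linarith [hB, mul_nonneg hσ hB, mul_nonneg hμA hB, mul_nonneg hμI hB, mul_nonneg hμL hB, mul_nonneg hCb hB, mul_nonneg hCb (sq_nonneg B), mul_le_mul_of_nonneg_right hlA.2 hB, mul_le_mul_of_nonneg_right hlI.2 hB, mul_nonneg hlA.1 hB, mul_nonneg hlI.1 hB]
  · rw [show Fpic bI bA xi σ μA μI μL lA lI B s x ⟨1, by norm_num⟩
        = Fpic bI bA xi σ μA μI μL lA lI B s x 1 from rfl, Fpic_c1]
    have h1 := hm (bI s) 0 2 hbI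
    have h2 := hm (bA s) 0 1 hbA
    have h3 := hs (σ + μA + lA) 1 (by linarith [hlA.1])
    rw [abs_le] at h1 h2 h3 ⊢
    constructor <;> linarith [hB, mul_nonneg hσ hB, mul_nonneg hμA hB, mul_nonneg hμI hB, mul_nonneg hμL hB, mul_nonneg hCb hB, mul_nonneg hCb (sq_nonneg B), mul_le_mul_of_nonneg_right hlA.2 hB, mul_le_mul_of_nonneg_right hlI.2 hB, mul_nonneg hlA.1 hB, mul_nonneg hlI.1 hB]
  · rw [show Fpic bI bA xi σ μA μI μL lA lI B s x ⟨2, by norm_num⟩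
        = Fpic bI bA xi σ μA μI μL lA lI B s x 2 from rfl, Fpic_c2]
    have h1 := hs σ 1 hσ
    have h2 := hs (μI + lI) 2 (by linarith [hlI.1])
    rw [abs_le] at h1 h2 ⊢
    constructor <;> linarith [hB, mul_nonneg hσ hB, mul_nonneg hμA hB, mul_nonneg hμI hB, mul_nonneg hμL hB, mul_nonneg hCb hB, mul_nonneg hCb (sq_nonneg B), mul_le_mul_of_nonneg_right hlA.2 hB, mul_le_mul_of_nonneg_right hlI.2 hB, mul_nonneg hlA.1 hB, mul_nonneg hlI.1 hB]
  · rw [show Fpic bI bA xi σ μA μI μL lA lI B s x ⟨3, by norm_num⟩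
        = Fpic bI bA xi σ μA μI μL lA lI B s x 3 from rfl, Fpic_c3]
    have h1 := hs lA 1 hlA.1
    have h2 := hs lI 2 hlI.1
    have h3 := hs μL 3 hμL
    rw [abs_le] at h1 h2 h3 ⊢
    constructor <;> linarith [hB, mul_nonneg hσ hB, mul_nonneg hμA hB, mul_nonneg hμI hB, mul_nonneg hμL hB, mul_nonneg hCb hB, mul_nonneg hCb (sq_nonneg B), mul_le_mul_of_nonneg_right hlA.2 hB, mul_le_mul_of_nonneg_right hlI.2 hB, mul_nonneg hlA.1 hB, mul_nonneg hlI.1 hB]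
  · rw [show Fpic bI bA xi σ μA μI μL lA lI B s x ⟨4, by norm_num⟩
        = Fpic bI bA xi σ μA μI μL lA lI B s x 4 from rfl, Fpic_c4]
    have h1 := hs μA 1 hμA
    have h2 := hs μI 2 hμI
    have h3 := hs μL 3 hμL
    have h4 := hx1 4
    rw [abs_le] at h1 h2 h3 h4 ⊢
    constructor <;> linarith [hB, mul_nonneg hσ hB, mul_nonneg hμA hB, mul_nonneg hμI hB, mul_nonneg hμL hB, mul_nonneg hCb hB, mul_nonneg hCb (sq_nonneg B), mul_le_mul_of_nonneg_right hlA.2 hB, mul_le_mul_of_nonneg_right hlI.2 hB, mul_nonneg hlA.1 hB, mul_nonneg hlI.1 hB]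

/-- Lipschitz in the state -/
lemma Fpic_lip (hB : 0 ≤ B) (hσ : 0 ≤ σ) (hμA : 0 ≤ μA) (hμI : 0 ≤ μI)
    (hμL : 0 ≤ μL) (hlA : lA ∈ Icc (0:ℝ) 1) (hlI : lI ∈ Icc (0:ℝ) 1)
    (hbI : |bI s| ≤ Cb) (hbA : |bA s| ≤ Cb) (hxi : |xi s| ≤ Cb)
    (i : Fin 5) (y : Fin 5 → ℝ) :
    |Fpic bI bA xi σ μA μI μL lA lI B s x i - Fpic bI bA xi σ μA μI μL lA lI B s y i| ≤
      (4*Cb*B + Cb + σ + μA + μI + μL + 3) * dist x y := by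
  have hCb : 0 ≤ Cb := le_trans (abs_nonneg _) hbI
  set d := dist x y with hd
  have hd0 : 0 ≤ d := dist_nonneg
  have hcd : ∀ j, |clampB B (x j) - clampB B (y j)| ≤ d := by
    intro j
    calc |clampB B (x j) - clampB B (y j)| ≤ |x j - y j| := clampB_lip
      _ ≤ d := by rw [← Real.dist_eq]; exact dist_le_pi_dist x y j
  have hcx : ∀ j, |clampB B (x j)| ≤ B := fun _ => clampB_abs_le hB
  have hcy : ∀ j, |clampB B (y j)| ≤ B := fun _ => clampB_abs_le hB
  -- product difference bounds
  have hpd : ∀ (p : ℝ) (j k : Fin 5), |p| ≤ Cb →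
      |p * clampB B (x j) * clampB B (x k) - p * clampB B (y j) * clampB B (y k)| ≤ Cb * B * (2*d) := by
    intro p j k hp
    calc |p * clampB B (x j) * clampB B (x k) - p * clampB B (y j) * clampB B (y k)|
        ≤ Cb * B * (|clampB B (x j) - clampB B (y j)| + |clampB B (x k) - clampB B (y k)|) :=
          prod_diff_le hB hp (hcx j) (hcy k)
      _ ≤ Cb * B * (2*d) := by
          apply mul_le_mul_of_nonneg_left _ (mul_nonneg hCb hB)
          linarith [hcd j, hcd k]
  have hsd : ∀ (c : ℝ) (j : Fin 5), 0 ≤ c →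
      |c * clampB B (x j) - c * clampB B (y j)| ≤ c * d := by
    intro c j hcc
    rw [← mul_sub, abs_mul, abs_of_nonneg hcc]
    exact mul_le_mul_of_nonneg_left (hcd j) hcc
  have hxd : ∀ j, |xi s * clampB B (x j) - xi s * clampB B (y j)| ≤ Cb * d := by
    intro j
    rw [← mul_sub, abs_mul]
    exact mul_le_mul hxi (hcd j) (abs_nonneg _) hCb
  fin_cases i
  · rw [show (⟨0, by norm_num⟩ : Fin 5) = 0 from rfl, Fpic_c0, Fpic_c0]
    have h1 := hpd (bI s) 0 2 hbI
    have h2 := hpd (bA s) 0 1 hbA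
    have h3 := hxd 4
    rw [abs_le] at h1 h2 h3 ⊢
    constructor <;> linarith [hd0, mul_nonneg hσ hd0, mul_nonneg hμA hd0, mul_nonneg hμI hd0, mul_nonneg hμL hd0, mul_nonneg hCb hd0, mul_nonneg (mul_nonneg hCb hB) hd0, mul_le_mul_of_nonneg_right hlA.2 hd0, mul_le_mul_of_nonneg_right hlI.2 hd0, mul_nonneg hlA.1 hd0, mul_nonneg hlI.1 hd0]
  · rw [show (⟨1, by norm_num⟩ : Fin 5) = 1 from rfl, Fpic_c1, Fpic_c1]
    have h1 := hpd (bI s) 0 2 hbI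
    have h2 := hpd (bA s) 0 1 hbA
    have h3 := hsd (σ + μA + lA) 1 (by linarith [hlA.1])
    rw [abs_le] at h1 h2 h3 ⊢
    constructor <;> linarith [hd0, mul_nonneg hσ hd0, mul_nonneg hμA hd0, mul_nonneg hμI hd0, mul_nonneg hμL hd0, mul_nonneg hCb hd0, mul_nonneg (mul_nonneg hCb hB) hd0, mul_le_mul_of_nonneg_right hlA.2 hd0, mul_le_mul_of_nonneg_right hlI.2 hd0, mul_nonneg hlA.1 hd0, mul_nonneg hlI.1 hd0]
  · rw [show (⟨2, by norm_num⟩ : Fin 5) = 2 from rfl, Fpic_c2, Fpic_c2]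
    have h1 := hsd σ 1 hσ
    have h2 := hsd (μI + lI) 2 (by linarith [hlI.1])
    rw [abs_le] at h1 h2 ⊢
    constructor <;> linarith [hd0, mul_nonneg hσ hd0, mul_nonneg hμA hd0, mul_nonneg hμI hd0, mul_nonneg hμL hd0, mul_nonneg hCb hd0, mul_nonneg (mul_nonneg hCb hB) hd0, mul_le_mul_of_nonneg_right hlA.2 hd0, mul_le_mul_of_nonneg_right hlI.2 hd0, mul_nonneg hlA.1 hd0, mul_nonneg hlI.1 hd0]
  · rw [show (⟨3, by norm_num⟩ : Fin 5) = 3 from rfl, Fpic_c3, Fpic_c3]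
    have h1 := hsd lA 1 hlA.1
    have h2 := hsd lI 2 hlI.1
    have h3 := hsd μL 3 hμL
    rw [abs_le] at h1 h2 h3 ⊢
    constructor <;> linarith [hd0, mul_nonneg hσ hd0, mul_nonneg hμA hd0, mul_nonneg hμI hd0, mul_nonneg hμL hd0, mul_nonneg hCb hd0, mul_nonneg (mul_nonneg hCb hB) hd0, mul_le_mul_of_nonneg_right hlA.2 hd0, mul_le_mul_of_nonneg_right hlI.2 hd0, mul_nonneg hlA.1 hd0, mul_nonneg hlI.1 hd0]
  · rw [show (⟨4, by norm_num⟩ : Fin 5) = 4 from rfl, Fpic_c4, Fpic_c4]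
    have h1 := hsd μA 1 hμA
    have h2 := hsd μI 2 hμI
    have h3 := hsd μL 3 hμL
    have h4 := hxd 4
    rw [abs_le] at h1 h2 h3 h4 ⊢
    constructor <;> linarith [hd0, mul_nonneg hσ hd0, mul_nonneg hμA hd0, mul_nonneg hμI hd0, mul_nonneg hμL hd0, mul_nonneg hCb hd0, mul_nonneg (mul_nonneg hCb hB) hd0, mul_le_mul_of_nonneg_right hlA.2 hd0, mul_le_mul_of_nonneg_right hlI.2 hd0, mul_nonneg hlA.1 hd0, mul_nonneg hlI.1 hd0]

end FpicLemmas

lemma cont_primitive {h : ℝ → ℝ} {T C : ℝ} (hC : 0 ≤ C)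
    (hint : IntegrableOn h (Icc 0 T)) (hb : ∀ s, |h s| ≤ C) :
    ContinuousOn (fun t => ∫ s in (0:ℝ)..t, h s) (Icc 0 T) := by
  rw [Metric.continuousOn_iff]
  intro t ht ε hε
  refine ⟨ε / (C+1), by positivity, fun t' ht' hd => ?_⟩
  rw [Real.dist_eq, primitive_sub hint ht ht']
  calc |∫ s in t..t', h s| ≤ C * |t' - t| := by
        simpa [Real.norm_eq_abs] using
          intervalIntegral.norm_integral_le_of_norm_le_const
            (C := C) (f := h) (a := t) (b := t') (fun x _ => by simpa [Real.norm_eq_abs] using hb x)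
    _ ≤ C * (ε / (C+1)) := by
        apply mul_le_mul_of_nonneg_left _ hC
        rw [Real.dist_eq] at hd; exact hd.le
    _ = ε * (C / (C+1)) := by ring
    _ < ε * 1 := by
        apply mul_lt_mul_of_pos_left _ hε
        rw [div_lt_one (by positivity : (0:ℝ) < C + 1)]
        linarith
    _ = ε := mul_one ε
    
theorem sailr_exists (T : ℝ) (hT : 0 < T) (bI bA xi : ℝ → ℝ) (hrates : RatesOK bI bA xi)
    (σ μA μI μL : ℝ)
    (hσ : 0 ≤ σ) (hμA : 0 ≤ μA) (hμI : 0 ≤ μI) (hμL : 0 ≤ μL)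
    (S0 A0 I0 L0 R0 : ℝ)
    (hS0 : 0 ≤ S0) (hA0 : 0 ≤ A0) (hI0 : 0 ≤ I0) (hL0 : 0 ≤ L0) (hR0 : 0 ≤ R0)
    (lA lI : ℝ) (hlA : lA ∈ Icc (0:ℝ) 1) (hlI : lI ∈ Icc (0:ℝ) 1) :
    ∃ S A I L R : ℝ → ℝ,
      IsSAILRSolution T bI bA xi σ μA μI μL lA lI S0 A0 I0 L0 R0 S A I L R ∧
      ∀ t ∈ Icc (0:ℝ) T, 0 ≤ S t ∧ 0 ≤ A t ∧ 0 ≤ I t ∧ 0 ≤ L t ∧ 0 ≤ R t ∧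
        S t + A t + I t + L t + R t = S0 + A0 + I0 + L0 + R0 := by
  obtain ⟨mbI, mbA, mxi, ⟨Cb, hCb⟩, hae⟩ := hrates
  have hCb0 : 0 ≤ Cb := le_trans (abs_nonneg _) (hCb 0).1
  set N0 : ℝ := S0 + A0 + I0 + L0 + R0 with hN0
  have hN00 : 0 ≤ N0 := by positivity
  set B : ℝ := N0 + 1 with hBdef
  have hB : 0 ≤ B := by positivity
  set MG : ℝ := 2*Cb*B^2 + Cb*B + (σ+μA+μI+μL+3)*B with hMGdef
  have hMG0 : 0 ≤ MG := by positivity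
  set KL : ℝ := 4*Cb*B + Cb + σ + μA + μI + μL + 3 with hKLdef
  have hKL0 : 0 ≤ KL := by positivity
  haveI : Nonempty C(Icc (0:ℝ) T, Fin 5 → ℝ) := ⟨ContinuousMap.const _ 0⟩
  set u0v : Fin 5 → ℝ := ![S0, A0, I0, L0, R0] with hu0v
  have hu0nn : ∀ i, 0 ≤ u0v i := by
    intro i; fin_cases i
    · exact hS0
    · exact hA0
    · exact hI0
    · exact hL0
    · exact hR0
  set ext : C(Icc (0:ℝ) T, Fin 5 → ℝ) → ℝ → Fin 5 → ℝ :=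
    fun u s => u (projIcc 0 T hT.le s) with hextdef
  have hext_cont : ∀ u, Continuous (ext u) := fun u => u.continuous.comp continuous_projIcc
  set g : C(Icc (0:ℝ) T, Fin 5 → ℝ) → Fin 5 → ℝ → ℝ :=
    fun u i s => Fpic bI bA xi σ μA μI μL lA lI B s (ext u s) i with hgdef
  have hcCont : ∀ u (j : Fin 5), Continuous (fun s => clampB B (ext u s j)) := by
    intro u j
    exact continuous_const.min (((continuous_apply j).comp (hext_cont u)).max continuous_const)
  have hgmeas : ∀ u (i : Fin 5), Measurable (g u i) := by
    intro u i
    have hm : ∀ j, Measurable (fun s => clampB B (ext u s j)) := fun j => (hcCont u j).measurable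
    fin_cases i
    · show Measurable fun s => Fpic bI bA xi σ μA μI μL lA lI B s (ext u s) 0
      simp only [Fpic_c0]
      exact (((mbI.mul (hm 0)).mul (hm 2)).neg.sub ((mbA.mul (hm 0)).mul (hm 1))).add
        (mxi.mul (hm 4))
    · show Measurable fun s => Fpic bI bA xi σ μA μI μL lA lI B s (ext u s) 1
      simp only [Fpic_c1]
      exact ((((mbI.mul (hm 0)).mul (hm 2))).add ((mbA.mul (hm 0)).mul (hm 1))).sub
        ((hm 1).const_mul _)
    · show Measurable fun s => Fpic bI bA xi σ μA μI μL lA lI B s (ext u s) 2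
      simp only [Fpic_c2]
      exact ((hm 1).const_mul _).sub ((hm 2).const_mul _)
    · show Measurable fun s => Fpic bI bA xi σ μA μI μL lA lI B s (ext u s) 3
      simp only [Fpic_c3]
      exact (((hm 1).const_mul _).add ((hm 2).const_mul _)).sub ((hm 3).const_mul _)
    · show Measurable fun s => Fpic bI bA xi σ μA μI μL lA lI B s (ext u s) 4
      simp only [Fpic_c4]
      exact ((((hm 1).const_mul _).add ((hm 2).const_mul _)).add ((hm 3).const_mul _)).sub
        (mxi.mul (hm 4))
  have hgbd : ∀ u (s : ℝ) (i : Fin 5), |g u i s| ≤ MG := fun u s i =>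
    Fpic_bound hB hσ hμA hμI hμL hlA hlI (hCb s).1 (hCb s).2.1 (hCb s).2.2 i
  have hgint : ∀ u (i : Fin 5), IntegrableOn (g u i) (Icc 0 T) := by
    intro u i
    apply Measure.integrableOn_of_bounded (measure_Icc_lt_top).ne
      (hgmeas u i).aestronglyMeasurable
    exact Eventually.of_forall (fun s => by simpa [Real.norm_eq_abs] using hgbd u s i)
  have hgii : ∀ u (i : Fin 5) {a b : ℝ}, a ∈ Icc (0:ℝ) T → b ∈ Icc (0:ℝ) T →
      IntervalIntegrable (g u i) volume a b := by
    intro u i a b ha hb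
    exact ii_of_Icc (hgint u i) ha hb
  have h0T : (0:ℝ) ∈ Icc (0:ℝ) T := ⟨le_refl 0, hT.le⟩
  have hcontΦ : ∀ u, Continuous (fun t : Icc (0:ℝ) T => fun i =>
      u0v i + ∫ s in (0:ℝ)..(t:ℝ), g u i s) := by
    intro u
    apply continuous_pi
    intro i
    exact continuous_const.add (cont_primitive hMG0 (hgint u i) (fun s => hgbd u s i)).restrict
  set Φ : C(Icc (0:ℝ) T, Fin 5 → ℝ) → C(Icc (0:ℝ) T, Fin 5 → ℝ) :=
    fun u => ⟨_, hcontΦ u⟩ with hΦdef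
  have hΦapp : ∀ u (t : Icc (0:ℝ) T) (i : Fin 5),
      Φ u t i = u0v i + ∫ s in (0:ℝ)..(t:ℝ), g u i s := fun u t i => rfl
  -- iterate estimates
  have iter : ∀ (n : ℕ) u v (t : Icc (0:ℝ) T),
      dist ((Φ^[n] u) t) ((Φ^[n] v) t) ≤ (KL*(t:ℝ))^n / (Nat.factorial n) * dist u v := by
    intro n
    induction n with
    | zero =>
      intro u v t
      simpa using ContinuousMap.dist_apply_le_dist t
    | succ n ih =>
      intro u v t
      rw [Function.iterate_succ_apply' Φ n u, Function.iterate_succ_apply' Φ n v]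
      have ht0 : 0 ≤ (t:ℝ) := t.2.1
      have htT : (t:ℝ) ∈ Icc (0:ℝ) T := t.2
      have hfne : (Nat.factorial n : ℝ) ≠ 0 := Nat.cast_ne_zero.2 n.factorial_pos.ne'
      have hrhs0 : 0 ≤ (KL*(t:ℝ))^(n+1) / (Nat.factorial (n+1)) * dist u v := by positivity
      rw [dist_pi_le_iff hrhs0]
      intro i
      rw [hΦapp, hΦapp, Real.dist_eq]
      have he : (u0v i + ∫ s in (0:ℝ)..(t:ℝ), g (Φ^[n] u) i s)
          - (u0v i + ∫ s in (0:ℝ)..(t:ℝ), g (Φ^[n] v) i s)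
          = ∫ s in (0:ℝ)..(t:ℝ), (g (Φ^[n] u) i s - g (Φ^[n] v) i s) := by
        rw [intervalIntegral.integral_sub (hgii _ i h0T htT) (hgii _ i h0T htT)]; ring
      rw [he]
      have hmaj : ∀ s ∈ Icc (0:ℝ) (t:ℝ),
          |g (Φ^[n] u) i s - g (Φ^[n] v) i s| ≤
            (KL^(n+1) / (Nat.factorial n) * dist u v) * s^n := by
        intro s hs
        have hsT : s ∈ Icc (0:ℝ) T := ⟨hs.1, hs.2.trans t.2.2⟩
        have hlip := Fpic_lip (B := B) (x := ext (Φ^[n] u) s) hB hσ hμA hμI hμL hlA hlI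
          (hCb s).1 (hCb s).2.1 (hCb s).2.2 i (ext (Φ^[n] v) s)
        have hdd : dist (ext (Φ^[n] u) s) (ext (Φ^[n] v) s) ≤
            (KL*s)^n / (Nat.factorial n) * dist u v := by
          show dist ((Φ^[n] u) (projIcc 0 T hT.le s)) ((Φ^[n] v) (projIcc 0 T hT.le s)) ≤ _
          rw [projIcc_of_mem hT.le hsT]
          simpa using ih u v ⟨s, hsT⟩
        calc |g (Φ^[n] u) i s - g (Φ^[n] v) i s|
            ≤ KL * dist (ext (Φ^[n] u) s) (ext (Φ^[n] v) s) := hlip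
          _ ≤ KL * ((KL*s)^n / (Nat.factorial n) * dist u v) :=
              mul_le_mul_of_nonneg_left hdd hKL0
          _ = (KL^(n+1) / (Nat.factorial n) * dist u v) * s^n := by rw [mul_pow]; ring
      calc |∫ s in (0:ℝ)..(t:ℝ), (g (Φ^[n] u) i s - g (Φ^[n] v) i s)|
          ≤ ∫ s in (0:ℝ)..(t:ℝ), |g (Φ^[n] u) i s - g (Φ^[n] v) i s| := by
            simpa [Real.norm_eq_abs] using
              intervalIntegral.norm_integral_le_integral_norm
                (f := fun s => g (Φ^[n] u) i s - g (Φ^[n] v) i s) ht0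
        _ ≤ ∫ s in (0:ℝ)..(t:ℝ), (KL^(n+1) / (Nat.factorial n) * dist u v) * s^n := by
            apply intervalIntegral.integral_mono_on ht0
              ((hgii _ i h0T htT).sub (hgii _ i h0T htT)).abs
              ((continuous_const.mul (continuous_pow n)).intervalIntegrable _ _)
              hmaj
        _ = (KL^(n+1) / (Nat.factorial n) * dist u v) * (t:ℝ)^(n+1)/(n+1) := int_cpow _ _ _
        _ = (KL*(t:ℝ))^(n+1) / (Nat.factorial (n+1)) * dist u v := by
            rw [Nat.factorial_succ, mul_pow]
            push_cast
            field_simp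
  -- contraction
  obtain ⟨n, hn⟩ : ∃ n : ℕ, (KL*T)^n / (Nat.factorial n) < 1 :=
    ((FloorSemiring.tendsto_pow_div_factorial_atTop (KL*T)).eventually_lt_const one_pos).exists
  have hfp : (0:ℝ) < Nat.factorial n := by exact_mod_cast n.factorial_pos
  set c : ℝ := (KL*T)^n / (Nat.factorial n) with hc
  have hc0 : 0 ≤ c := by positivity
  have hΦnlip : ∀ u v, dist (Φ^[n] u) (Φ^[n] v) ≤ c * dist u v := by
    intro u v
    rw [ContinuousMap.dist_le (by positivity)]
    intro t
    refine (iter n u v t).trans ?_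
    apply mul_le_mul_of_nonneg_right _ dist_nonneg
    apply (div_le_div_iff_of_pos_right hfp).2
    exact pow_le_pow_left₀ (mul_nonneg hKL0 t.2.1) (mul_le_mul_of_nonneg_left t.2.2 hKL0) n
  have hcontr : ContractingWith c.toNNReal (Φ^[n]) := by
    constructor
    · have : (c.toNNReal : ℝ) < 1 := by rwa [Real.coe_toNNReal _ hc0]
      exact_mod_cast this
    · apply LipschitzWith.of_dist_le_mul
      intro u v
      rw [Real.coe_toNNReal _ hc0]
      exact hΦnlip u v
  set ustar := ContractingWith.fixedPoint (Φ^[n]) hcontr with hustar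
  have hfixn : Φ^[n] ustar = ustar := hcontr.fixedPoint_isFixedPt
  have hfixΦn : Function.IsFixedPt (Φ^[n]) (Φ ustar) := by
    show Φ^[n] (Φ ustar) = Φ ustar
    calc Φ^[n] (Φ ustar) = Φ^[n+1] ustar := (Function.iterate_succ_apply Φ n ustar).symm
      _ = Φ (Φ^[n] ustar) := Function.iterate_succ_apply' Φ n ustar
      _ = Φ ustar := by rw [hfixn]
  have hfix : Φ ustar = ustar := hcontr.fixedPoint_unique hfixΦn
  -- the solution
  have hweq : ∀ t ∈ Icc (0:ℝ) T, ∀ i : Fin 5,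
      ext ustar t i = u0v i + ∫ s in (0:ℝ)..t, g ustar i s := by
    intro t ht i
    show ustar (projIcc 0 T hT.le t) i = _
    rw [projIcc_of_mem hT.le ht]
    conv_lhs => rw [← hfix]
    exact hΦapp ustar ⟨t, ht⟩ i
  have hnn : ∀ t ∈ Icc (0:ℝ) T, ∀ i : Fin 5, 0 ≤ ext ustar t i := by
    intro t ht i
    refine nonneg_of_IntEq (T := T) (w0 := u0v i) hT.le
      ((continuous_apply i).comp (hext_cont ustar)).continuousOn (hgint ustar i)
      (hu0nn i) (fun τ hτ => hweq τ hτ i) ?_ t ht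
    filter_upwards [hae] with s hs
    intro hsI hneg
    exact Fpic_nonneg_of_neg hB hσ hμA hμI hμL hlA.1 hlI.1 (hs hsI.1).1 (hs hsI.1).2.1
      (hs hsI.1).2.2 i hneg
  have hsum : ∀ t ∈ Icc (0:ℝ) T,
      ext ustar t 0 + ext ustar t 1 + ext ustar t 2 + ext ustar t 3 + ext ustar t 4 = N0 := by
    intro t ht
    rw [hweq t ht 0, hweq t ht 1, hweq t ht 2, hweq t ht 3, hweq t ht 4]
    have e01 := intervalIntegral.integral_add (hgii ustar 0 h0T ht) (hgii ustar 1 h0T ht)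
    have e02 := intervalIntegral.integral_add ((hgii ustar 0 h0T ht).add (hgii ustar 1 h0T ht))
      (hgii ustar 2 h0T ht)
    have e03 := intervalIntegral.integral_add (((hgii ustar 0 h0T ht).add
      (hgii ustar 1 h0T ht)).add (hgii ustar 2 h0T ht)) (hgii ustar 3 h0T ht)
    have e04 := intervalIntegral.integral_add ((((hgii ustar 0 h0T ht).add
      (hgii ustar 1 h0T ht)).add (hgii ustar 2 h0T ht)).add (hgii ustar 3 h0T ht))
      (hgii ustar 4 h0T ht)
    have hzero : (∫ s in (0:ℝ)..t, (((g ustar 0 s + g ustar 1 s) + g ustar 2 s) + g ustar 3 s)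
        + g ustar 4 s) = 0 := by
      have : (fun s => (((g ustar 0 s + g ustar 1 s) + g ustar 2 s) + g ustar 3 s)
          + g ustar 4 s) = fun _ => (0:ℝ) := funext fun s => Fpic_sum
      rw [intervalIntegral.integral_congr (fun s _ => congrFun this s)]
      simp
    have hv0 : u0v 0 = S0 := rfl
    have hv1 : u0v 1 = A0 := rfl
    have hv2 : u0v 2 = I0 := rfl
    have hv3 : u0v 3 = L0 := rfl
    have hv4 : u0v 4 = R0 := rfl
    rw [hv0, hv1, hv2, hv3, hv4]
    rw [e03, e02, e01] at e04
    rw [hzero] at e04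
    rw [hN0]
    linarith [e04]
  have hub : ∀ t ∈ Icc (0:ℝ) T, ∀ i : Fin 5, ext ustar t i ≤ N0 := by
    intro t ht i
    have h0 := hnn t ht 0
    have h1 := hnn t ht 1
    have h2 := hnn t ht 2
    have h3 := hnn t ht 3
    have h4 := hnn t ht 4
    have hs := hsum t ht
    fin_cases i
    · show ext ustar t 0 ≤ N0; linarith
    · show ext ustar t 1 ≤ N0; linarith
    · show ext ustar t 2 ≤ N0; linarith
    · show ext ustar t 3 ≤ N0; linarith
    · show ext ustar t 4 ≤ N0; linarith
  have hclamp : ∀ t ∈ Icc (0:ℝ) T, ∀ j : Fin 5, clampB B (ext ustar t j) = ext ustar t j :=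
    fun t ht j => clampB_eq (hnn t ht j) (le_trans (hub t ht j) (by rw [hBdef]; linarith))
  set Sf : ℝ → ℝ := fun t => ext ustar t 0 with hSf
  set Af : ℝ → ℝ := fun t => ext ustar t 1 with hAf
  set If : ℝ → ℝ := fun t => ext ustar t 2 with hIf
  set Lf : ℝ → ℝ := fun t => ext ustar t 3 with hLf
  set Rf : ℝ → ℝ := fun t => ext ustar t 4 with hRf
  have hgeq0 : ∀ s ∈ Icc (0:ℝ) T, g ustar 0 s = dS bI bA xi Sf Af If Rf s := by
    intro s hs
    show Fpic bI bA xi σ μA μI μL lA lI B s (ext ustar s) 0 = _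
    rw [Fpic_c0, hclamp s hs 0, hclamp s hs 1, hclamp s hs 2, hclamp s hs 4]
    rfl
  have hgeq1 : ∀ s ∈ Icc (0:ℝ) T, g ustar 1 s = dA bI bA σ μA lA Sf Af If s := by
    intro s hs
    show Fpic bI bA xi σ μA μI μL lA lI B s (ext ustar s) 1 = _
    rw [Fpic_c1, hclamp s hs 0, hclamp s hs 1, hclamp s hs 2]
    rfl
  have hgeq2 : ∀ s ∈ Icc (0:ℝ) T, g ustar 2 s = dI σ μI lI Af If s := by
    intro s hs
    show Fpic bI bA xi σ μA μI μL lA lI B s (ext ustar s) 2 = _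
    rw [Fpic_c2, hclamp s hs 1, hclamp s hs 2]
    rfl
  have hgeq3 : ∀ s ∈ Icc (0:ℝ) T, g ustar 3 s = dL μL lA lI Af If Lf s := by
    intro s hs
    show Fpic bI bA xi σ μA μI μL lA lI B s (ext ustar s) 3 = _
    rw [Fpic_c3, hclamp s hs 1, hclamp s hs 2, hclamp s hs 3]
    rfl
  have hgeq4 : ∀ s ∈ Icc (0:ℝ) T, g ustar 4 s = dR xi μA μI μL Af If Lf Rf s := by
    intro s hs
    show Fpic bI bA xi σ μA μI μL lA lI B s (ext ustar s) 4 = _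
    rw [Fpic_c4, hclamp s hs 1, hclamp s hs 2, hclamp s hs 3, hclamp s hs 4]
    rfl
  have huIcc : ∀ t ∈ Icc (0:ℝ) T, uIcc (0:ℝ) t ⊆ Icc (0:ℝ) T := by
    intro t ht
    rw [uIcc_of_le ht.1]
    exact Icc_subset_Icc le_rfl ht.2
  refine ⟨Sf, Af, If, Lf, Rf, ⟨?_, ?_, ?_, ?_, ?_, ?_, ?_, ?_, ?_, ?_, ?_, ?_, ?_, ?_, ?_⟩, ?_⟩
  · exact ((continuous_apply (0:Fin 5)).comp (hext_cont ustar)).continuousOn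
  · exact ((continuous_apply (1:Fin 5)).comp (hext_cont ustar)).continuousOn
  · exact ((continuous_apply (2:Fin 5)).comp (hext_cont ustar)).continuousOn
  · exact ((continuous_apply (3:Fin 5)).comp (hext_cont ustar)).continuousOn
  · exact ((continuous_apply (4:Fin 5)).comp (hext_cont ustar)).continuousOn
  · exact (hgint ustar 0).congr_fun hgeq0 measurableSet_Icc
  · exact (hgint ustar 1).congr_fun hgeq1 measurableSet_Icc
  · exact (hgint ustar 2).congr_fun hgeq2 measurableSet_Icc
  · exact (hgint ustar 3).congr_fun hgeq3 measurableSet_Icc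
  · exact (hgint ustar 4).congr_fun hgeq4 measurableSet_Icc
  · intro t ht
    rw [show Sf t = ext ustar t 0 from rfl, hweq t ht 0,
      intervalIntegral.integral_congr (fun s hs => hgeq0 s (huIcc t ht hs))]
    rfl
  · intro t ht
    rw [show Af t = ext ustar t 1 from rfl, hweq t ht 1,
      intervalIntegral.integral_congr (fun s hs => hgeq1 s (huIcc t ht hs))]
    rfl
  · intro t ht
    rw [show If t = ext ustar t 2 from rfl, hweq t ht 2,
      intervalIntegral.integral_congr (fun s hs => hgeq2 s (huIcc t ht hs))]
    rfl
  · intro t ht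
    rw [show Lf t = ext ustar t 3 from rfl, hweq t ht 3,
      intervalIntegral.integral_congr (fun s hs => hgeq3 s (huIcc t ht hs))]
    rfl
  · intro t ht
    rw [show Rf t = ext ustar t 4 from rfl, hweq t ht 4,
      intervalIntegral.integral_congr (fun s hs => hgeq4 s (huIcc t ht hs))]
    rfl
  · intro t ht
    exact ⟨hnn t ht 0, hnn t ht 1, hnn t ht 2, hnn t ht 3, hnn t ht 4, hsum t ht⟩

lemma const_mul_diff_le {p c x x' : ℝ} (hp : |p| ≤ c) : |p*x - p*x'| ≤ c * |x - x'| := by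
  rw [← mul_sub, abs_mul]
  exact mul_le_mul_of_nonneg_right hp (abs_nonneg _)

lemma abs_add3 (u v w : ℝ) : |u + v + w| ≤ |u| + |v| + |w| := by
  calc |u + v + w| ≤ |u + v| + |w| := abs_add_le _ _
    _ ≤ |u| + |v| + |w| := by linarith [abs_add_le u v]

/-- pointwise bound on the sum of the five field differences -/
lemma sailr_field_diff (bI bA xi : ℝ → ℝ) (σ μA μI μL lA lI lA' lI' : ℝ)
    (S A I L R S' A' I' L' R' : ℝ → ℝ) (Cb M : ℝ) (s : ℝ)
    (hσ : 0 ≤ σ) (hμA : 0 ≤ μA) (hμI : 0 ≤ μI) (hμL : 0 ≤ μL)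
    (hlA : lA ∈ Icc (0:ℝ) 1) (hlI : lI ∈ Icc (0:ℝ) 1)
    (hlA' : lA' ∈ Icc (0:ℝ) 1) (hlI' : lI' ∈ Icc (0:ℝ) 1)
    (hM : 0 ≤ M)
    (hCbs : |bI s| ≤ Cb ∧ |bA s| ≤ Cb ∧ |xi s| ≤ Cb)
    (hb1 : |S s| ≤ M ∧ |A s| ≤ M ∧ |I s| ≤ M ∧ |L s| ≤ M ∧ |R s| ≤ M)
    (hb2 : |S' s| ≤ M ∧ |A' s| ≤ M ∧ |I' s| ≤ M ∧ |L' s| ≤ M ∧ |R' s| ≤ M) :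
    |dS bI bA xi S A I R s - dS bI bA xi S' A' I' R' s| +
    |dA bI bA σ μA lA S A I s - dA bI bA σ μA lA' S' A' I' s| +
    |dI σ μI lI A I s - dI σ μI lI' A' I' s| +
    |dL μL lA lI A I L s - dL μL lA' lI' A' I' L' s| +
    |dR xi μA μI μL A I L R s - dR xi μA μI μL A' I' L' R' s| ≤
      (4*Cb*(σ+μA+μI+μL+M+3) + 4*(σ+μA+μI+μL+M+3) + 2*Cb + 2*σ + 2*μA + 2*μI + 2*μL) *
        (|S s - S' s| + |A s - A' s| + |I s - I' s| + |L s - L' s| + |R s - R' s|) +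
      2*(σ+μA+μI+μL+M+3)*(|lA - lA'| + |lI - lI'|) := by
  obtain ⟨hbI, hbA, hxi⟩ := hCbs
  obtain ⟨hS1, hA1, hI1, hL1, hR1⟩ := hb1
  obtain ⟨hS2, hA2, hI2, hL2, hR2⟩ := hb2
  have hCb0 : 0 ≤ Cb := le_trans (abs_nonneg _) hbI
  set M2 : ℝ := σ+μA+μI+μL+M+3 with hM2def
  have hM2 : 0 ≤ M2 := by positivity
  have hSM2 : |S s| ≤ M2 := le_trans hS1 (by rw [hM2def]; linarith)
  have hAM2 : |A' s| ≤ M2 := le_trans hA2 (by rw [hM2def]; linarith)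
  have hIM2 : |I' s| ≤ M2 := le_trans hI2 (by rw [hM2def]; linarith)
  have hLM2 : |L' s| ≤ M2 := le_trans hL2 (by rw [hM2def]; linarith)
  have hcA : |σ + μA + lA| ≤ M2 := by
    rw [abs_of_nonneg (by linarith [hlA.1])]
    rw [hM2def]; linarith [hlA.2]
  have hcI : |μI + lI| ≤ M2 := by
    rw [abs_of_nonneg (by linarith [hlI.1])]
    rw [hM2def]; linarith [hlI.2]
  have hlAM2 : |lA| ≤ M2 := by
    rw [abs_of_nonneg hlA.1]; rw [hM2def]; linarith [hlA.2]
  have hlIM2 : |lI| ≤ M2 := by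
    rw [abs_of_nonneg hlI.1]; rw [hM2def]; linarith [hlI.2]
  have one_le : |(1:ℝ)| ≤ 1 := by norm_num
  -- product difference bounds
  have p1 : |bI s * S s * I s - bI s * S' s * I' s| ≤ Cb * M2 * (|S s - S' s| + |I s - I' s|) :=
    prod_diff_le hM2 hbI hSM2 hIM2
  have p2 : |bA s * S s * A s - bA s * S' s * A' s| ≤ Cb * M2 * (|S s - S' s| + |A s - A' s|) :=
    prod_diff_le hM2 hbA hSM2 hAM2
  have p3 : |xi s * R s - xi s * R' s| ≤ Cb * |R s - R' s| := const_mul_diff_le hxi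
  have p4' : |(σ + μA + lA) * A s - (σ + μA + lA') * A' s| ≤
      M2 * (|lA - lA'| + |A s - A' s|) := by
    have h := prod_diff_le (p := (1:ℝ)) (b := A s) (a' := σ + μA + lA') hM2 one_le hcA hAM2
    rw [show (σ + μA + lA) - (σ + μA + lA') = lA - lA' from by ring] at h
    simpa using h
  have p5 : |σ * A s - σ * A' s| ≤ σ * |A s - A' s| :=
    const_mul_diff_le (le_of_eq (abs_of_nonneg hσ))
  have p6' : |(μI + lI) * I s - (μI + lI') * I' s| ≤ M2 * (|lI - lI'| + |I s - I' s|) := by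
    have h := prod_diff_le (p := (1:ℝ)) (b := I s) (a' := μI + lI') hM2 one_le hcI hIM2
    rw [show (μI + lI) - (μI + lI') = lI - lI' from by ring] at h
    simpa using h
  have p7 : |1 * lA * A s - 1 * lA' * A' s| ≤ 1 * M2 * (|lA - lA'| + |A s - A' s|) :=
    prod_diff_le hM2 one_le hlAM2 hAM2
  have p8 : |1 * lI * I s - 1 * lI' * I' s| ≤ 1 * M2 * (|lI - lI'| + |I s - I' s|) :=
    prod_diff_le hM2 one_le hlIM2 hIM2
  have p9 : |μL * L s - μL * L' s| ≤ μL * |L s - L' s| :=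
    const_mul_diff_le (le_of_eq (abs_of_nonneg hμL))
  have p10 : |μA * A s - μA * A' s| ≤ μA * |A s - A' s| :=
    const_mul_diff_le (le_of_eq (abs_of_nonneg hμA))
  have p11 : |μI * I s - μI * I' s| ≤ μI * |I s - I' s| :=
    const_mul_diff_le (le_of_eq (abs_of_nonneg hμI))
  -- five field bounds
  have hS' : |dS bI bA xi S A I R s - dS bI bA xi S' A' I' R' s| ≤
      Cb * M2 * (|S s - S' s| + |I s - I' s|) + Cb * M2 * (|S s - S' s| + |A s - A' s|) +
        Cb * |R s - R' s| := by
    have he : dS bI bA xi S A I R s - dS bI bA xi S' A' I' R' s =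
        -(bI s * S s * I s - bI s * S' s * I' s) + -(bA s * S s * A s - bA s * S' s * A' s) +
          (xi s * R s - xi s * R' s) := by
      simp only [dS]; ring
    rw [he]
    refine (abs_add3 _ _ _).trans ?_
    rw [abs_neg, abs_neg]
    linarith
  have hA' : |dA bI bA σ μA lA S A I s - dA bI bA σ μA lA' S' A' I' s| ≤
      Cb * M2 * (|S s - S' s| + |I s - I' s|) + Cb * M2 * (|S s - S' s| + |A s - A' s|) +
        M2 * (|lA - lA'| + |A s - A' s|) := by
    have he : dA bI bA σ μA lA S A I s - dA bI bA σ μA lA' S' A' I' s =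
        (bI s * S s * I s - bI s * S' s * I' s) + (bA s * S s * A s - bA s * S' s * A' s) +
          -((σ + μA + lA) * A s - (σ + μA + lA') * A' s) := by
      simp only [dA]; ring
    rw [he]
    refine (abs_add3 _ _ _).trans ?_
    rw [abs_neg]
    linarith
  have hI' : |dI σ μI lI A I s - dI σ μI lI' A' I' s| ≤
      σ * |A s - A' s| + M2 * (|lI - lI'| + |I s - I' s|) := by
    have he : dI σ μI lI A I s - dI σ μI lI' A' I' s =
        (σ * A s - σ * A' s) + -((μI + lI) * I s - (μI + lI') * I' s) := by
      simp only [dI]; ring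
    rw [he]
    refine (abs_add_le _ _).trans ?_
    rw [abs_neg]
    linarith
  have hL' : |dL μL lA lI A I L s - dL μL lA' lI' A' I' L' s| ≤
      M2 * (|lA - lA'| + |A s - A' s|) + M2 * (|lI - lI'| + |I s - I' s|) +
        μL * |L s - L' s| := by
    have he : dL μL lA lI A I L s - dL μL lA' lI' A' I' L' s =
        (1 * lA * A s - 1 * lA' * A' s) + (1 * lI * I s - 1 * lI' * I' s) +
          -(μL * L s - μL * L' s) := by
      simp only [dL]; ring
    rw [he]
    refine (abs_add3 _ _ _).trans ?_
    rw [abs_neg]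
    linarith
  have hR' : |dR xi μA μI μL A I L R s - dR xi μA μI μL A' I' L' R' s| ≤
      μA * |A s - A' s| + μI * |I s - I' s| + μL * |L s - L' s| + Cb * |R s - R' s| := by
    have he : dR xi μA μI μL A I L R s - dR xi μA μI μL A' I' L' R' s =
        (μA * A s - μA * A' s) + (μI * I s - μI * I' s) + (μL * L s - μL * L' s) +
          -(xi s * R s - xi s * R' s) := by
      simp only [dR]; ring
    rw [he]
    calc |_ + _ + _ + _| ≤ |μA * A s - μA * A' s + (μI * I s - μI * I' s) + (μL * L s - μL * L' s)| + |-(xi s * R s - xi s * R' s)| := abs_add_le _ _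
      _ ≤ (|μA * A s - μA * A' s| + |μI * I s - μI * I' s| + |μL * L s - μL * L' s|) + |xi s * R s - xi s * R' s| := by
          rw [abs_neg]
          linarith [abs_add3 (μA * A s - μA * A' s) (μI * I s - μI * I' s) (μL * L s - μL * L' s)]
      _ ≤ μA * |A s - A' s| + μI * |I s - I' s| + μL * |L s - L' s| + Cb * |R s - R' s| := by
          linarith
  linarith [hS', hA', hI', hL', hR',
      mul_nonneg (mul_nonneg hCb0 hM2) (abs_nonneg (S s - S' s)),
      mul_nonneg hM2 (abs_nonneg (S s - S' s)),
      mul_nonneg hCb0 (abs_nonneg (S s - S' s)),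
      mul_nonneg hσ (abs_nonneg (S s - S' s)),
      mul_nonneg hμA (abs_nonneg (S s - S' s)),
      mul_nonneg hμI (abs_nonneg (S s - S' s)),
      mul_nonneg hμL (abs_nonneg (S s - S' s)),
      mul_nonneg (mul_nonneg hCb0 hM2) (abs_nonneg (A s - A' s)),
      mul_nonneg hM2 (abs_nonneg (A s - A' s)),
      mul_nonneg hCb0 (abs_nonneg (A s - A' s)),
      mul_nonneg hσ (abs_nonneg (A s - A' s)),
      mul_nonneg hμA (abs_nonneg (A s - A' s)),
      mul_nonneg hμI (abs_nonneg (A s - A' s)),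
      mul_nonneg hμL (abs_nonneg (A s - A' s)),
      mul_nonneg (mul_nonneg hCb0 hM2) (abs_nonneg (I s - I' s)),
      mul_nonneg hM2 (abs_nonneg (I s - I' s)),
      mul_nonneg hCb0 (abs_nonneg (I s - I' s)),
      mul_nonneg hσ (abs_nonneg (I s - I' s)),
      mul_nonneg hμA (abs_nonneg (I s - I' s)),
      mul_nonneg hμI (abs_nonneg (I s - I' s)),
      mul_nonneg hμL (abs_nonneg (I s - I' s)),
      mul_nonneg (mul_nonneg hCb0 hM2) (abs_nonneg (L s - L' s)),
      mul_nonneg hM2 (abs_nonneg (L s - L' s)),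
      mul_nonneg hCb0 (abs_nonneg (L s - L' s)),
      mul_nonneg hσ (abs_nonneg (L s - L' s)),
      mul_nonneg hμA (abs_nonneg (L s - L' s)),
      mul_nonneg hμI (abs_nonneg (L s - L' s)),
      mul_nonneg hμL (abs_nonneg (L s - L' s)),
      mul_nonneg (mul_nonneg hCb0 hM2) (abs_nonneg (R s - R' s)),
      mul_nonneg hM2 (abs_nonneg (R s - R' s)),
      mul_nonneg hCb0 (abs_nonneg (R s - R' s)),
      mul_nonneg hσ (abs_nonneg (R s - R' s)),
      mul_nonneg hμA (abs_nonneg (R s - R' s)),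
      mul_nonneg hμI (abs_nonneg (R s - R' s)),
      mul_nonneg hμL (abs_nonneg (R s - R' s)),
      mul_nonneg (mul_nonneg hCb0 hM2) (abs_nonneg (lA - lA')),
      mul_nonneg hM2 (abs_nonneg (lA - lA')),
      mul_nonneg hCb0 (abs_nonneg (lA - lA')),
      mul_nonneg hσ (abs_nonneg (lA - lA')),
      mul_nonneg hμA (abs_nonneg (lA - lA')),
      mul_nonneg hμI (abs_nonneg (lA - lA')),
      mul_nonneg hμL (abs_nonneg (lA - lA')),
      mul_nonneg (mul_nonneg hCb0 hM2) (abs_nonneg (lI - lI')),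
      mul_nonneg hM2 (abs_nonneg (lI - lI')),
      mul_nonneg hCb0 (abs_nonneg (lI - lI')),
      mul_nonneg hσ (abs_nonneg (lI - lI')),
      mul_nonneg hμA (abs_nonneg (lI - lI')),
      mul_nonneg hμI (abs_nonneg (lI - lI')),
      mul_nonneg hμL (abs_nonneg (lI - lI'))]

theorem sailr_diff (T : ℝ) (hT : 0 < T) (bI bA xi : ℝ → ℝ) (Cb : ℝ)
    (hCb : ∀ t, |bI t| ≤ Cb ∧ |bA t| ≤ Cb ∧ |xi t| ≤ Cb)
    (σ μA μI μL : ℝ)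
    (hσ : 0 ≤ σ) (hμA : 0 ≤ μA) (hμI : 0 ≤ μI) (hμL : 0 ≤ μL)
    (S0 A0 I0 L0 R0 : ℝ) (lA lI lA' lI' : ℝ)
    (hlA : lA ∈ Icc (0:ℝ) 1) (hlI : lI ∈ Icc (0:ℝ) 1)
    (hlA' : lA' ∈ Icc (0:ℝ) 1) (hlI' : lI' ∈ Icc (0:ℝ) 1)
    (S A I L R S' A' I' L' R' : ℝ → ℝ) (M : ℝ) (hM : 0 ≤ M)
    (hsol : IsSAILRSolution T bI bA xi σ μA μI μL lA lI S0 A0 I0 L0 R0 S A I L R)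
    (hsol' : IsSAILRSolution T bI bA xi σ μA μI μL lA' lI' S0 A0 I0 L0 R0 S' A' I' L' R')
    (hb1 : ∀ t ∈ Icc (0:ℝ) T, |S t| ≤ M ∧ |A t| ≤ M ∧ |I t| ≤ M ∧ |L t| ≤ M ∧ |R t| ≤ M)
    (hb2 : ∀ t ∈ Icc (0:ℝ) T, |S' t| ≤ M ∧ |A' t| ≤ M ∧ |I' t| ≤ M ∧ |L' t| ≤ M ∧ |R' t| ≤ M) :
    ∀ t ∈ Icc (0:ℝ) T,
      |S t - S' t| + |A t - A' t| + |I t - I' t| + |L t - L' t| + |R t - R' t| ≤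
        (2*(σ+μA+μI+μL+M+3)*(|lA - lA'| + |lI - lI'|)*T) *
          Real.exp ((4*Cb*(σ+μA+μI+μL+M+3) + 4*(σ+μA+μI+μL+M+3) + 2*Cb + 2*σ + 2*μA +
            2*μI + 2*μL) * T) := by
  have hCb0 : 0 ≤ Cb := le_trans (abs_nonneg _) (hCb 0).1
  set M2 : ℝ := σ+μA+μI+μL+M+3 with hM2def
  have hM20 : 0 ≤ M2 := by positivity
  set K : ℝ := 4*Cb*M2 + 4*M2 + 2*Cb + 2*σ + 2*μA + 2*μI + 2*μL with hKdef
  have hK0 : 0 ≤ K := by positivity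
  set aa : ℝ := 2*M2*(|lA - lA'| + |lI - lI'|) with haadef
  have haa0 : 0 ≤ aa := by positivity
  set δ : ℝ → ℝ := fun t =>
    |S t - S' t| + |A t - A' t| + |I t - I' t| + |L t - L' t| + |R t - R' t| with hδdef
  have hδnn : ∀ t, 0 ≤ δ t := fun t => by
    have := abs_nonneg (S t - S' t); have := abs_nonneg (A t - A' t)
    have := abs_nonneg (I t - I' t); have := abs_nonneg (L t - L' t)
    have := abs_nonneg (R t - R' t)
    simp only [hδdef]; linarith
  have hδcont : ContinuousOn δ (Icc 0 T) :=
    (((((hsol.contS.sub hsol'.contS).abs.add ((hsol.contA.sub hsol'.contA).abs)).add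
      ((hsol.contI.sub hsol'.contI).abs)).add ((hsol.contL.sub hsol'.contL).abs)).add
      ((hsol.contR.sub hsol'.contR).abs))
  have hδint : IntegrableOn δ (Icc 0 T) := hδcont.integrableOn_compact isCompact_Icc
  have h0T : (0:ℝ) ∈ Icc (0:ℝ) T := ⟨le_refl 0, hT.le⟩
  -- the five difference-of-fields functions
  set gS : ℝ → ℝ := fun s => dS bI bA xi S A I R s - dS bI bA xi S' A' I' R' s with hgS
  set gA : ℝ → ℝ := fun s => dA bI bA σ μA lA S A I s - dA bI bA σ μA lA' S' A' I' s with hgA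
  set gI : ℝ → ℝ := fun s => dI σ μI lI A I s - dI σ μI lI' A' I' s with hgI
  set gL : ℝ → ℝ := fun s => dL μL lA lI A I L s - dL μL lA' lI' A' I' L' s with hgL
  set gR : ℝ → ℝ := fun s => dR xi μA μI μL A I L R s - dR xi μA μI μL A' I' L' R' s with hgR
  have iiS : ∀ {u v : ℝ}, u ∈ Icc (0:ℝ) T → v ∈ Icc (0:ℝ) T → IntervalIntegrable gS volume u v :=
    fun hu hv => (ii_of_Icc hsol.intS hu hv).sub (ii_of_Icc hsol'.intS hu hv)
  have iiA : ∀ {u v : ℝ}, u ∈ Icc (0:ℝ) T → v ∈ Icc (0:ℝ) T → IntervalIntegrable gA volume u v :=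
    fun hu hv => (ii_of_Icc hsol.intA hu hv).sub (ii_of_Icc hsol'.intA hu hv)
  have iiI : ∀ {u v : ℝ}, u ∈ Icc (0:ℝ) T → v ∈ Icc (0:ℝ) T → IntervalIntegrable gI volume u v :=
    fun hu hv => (ii_of_Icc hsol.intI hu hv).sub (ii_of_Icc hsol'.intI hu hv)
  have iiL : ∀ {u v : ℝ}, u ∈ Icc (0:ℝ) T → v ∈ Icc (0:ℝ) T → IntervalIntegrable gL volume u v :=
    fun hu hv => (ii_of_Icc hsol.intL hu hv).sub (ii_of_Icc hsol'.intL hu hv)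
  have iiR : ∀ {u v : ℝ}, u ∈ Icc (0:ℝ) T → v ∈ Icc (0:ℝ) T → IntervalIntegrable gR volume u v :=
    fun hu hv => (ii_of_Icc hsol.intR hu hv).sub (ii_of_Icc hsol'.intR hu hv)
  have claim : ∀ t ∈ Icc (0:ℝ) T, δ t ≤ aa * T + K * ∫ s in (0:ℝ)..t, δ s := by
    intro t ht
    have habs : ∀ (f f' : ℝ → ℝ) (c0 : ℝ) (hf : ∀ τ ∈ Icc (0:ℝ) T,
        f τ = c0 + ∫ s in (0:ℝ)..τ, f' s), f t - (c0 + ∫ s in (0:ℝ)..t, f' s) = 0 :=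
      fun f f' c0 hf => by rw [hf t ht]; ring
    -- each component as an integral
    have eS : S t - S' t = ∫ s in (0:ℝ)..t, gS s := by
      rw [hsol.eqS t ht, hsol'.eqS t ht,
        intervalIntegral.integral_sub (ii_of_Icc hsol.intS h0T ht) (ii_of_Icc hsol'.intS h0T ht)]
      ring
    have eA : A t - A' t = ∫ s in (0:ℝ)..t, gA s := by
      rw [hsol.eqA t ht, hsol'.eqA t ht,
        intervalIntegral.integral_sub (ii_of_Icc hsol.intA h0T ht) (ii_of_Icc hsol'.intA h0T ht)]
      ring
    have eI : I t - I' t = ∫ s in (0:ℝ)..t, gI s := by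
      rw [hsol.eqI t ht, hsol'.eqI t ht,
        intervalIntegral.integral_sub (ii_of_Icc hsol.intI h0T ht) (ii_of_Icc hsol'.intI h0T ht)]
      ring
    have eL : L t - L' t = ∫ s in (0:ℝ)..t, gL s := by
      rw [hsol.eqL t ht, hsol'.eqL t ht,
        intervalIntegral.integral_sub (ii_of_Icc hsol.intL h0T ht) (ii_of_Icc hsol'.intL h0T ht)]
      ring
    have eR : R t - R' t = ∫ s in (0:ℝ)..t, gR s := by
      rw [hsol.eqR t ht, hsol'.eqR t ht,
        intervalIntegral.integral_sub (ii_of_Icc hsol.intR h0T ht) (ii_of_Icc hsol'.intR h0T ht)]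
      ring
    have aS : |S t - S' t| ≤ ∫ s in (0:ℝ)..t, |gS s| := by
      rw [eS]
      simpa [Real.norm_eq_abs] using intervalIntegral.norm_integral_le_integral_norm (f := gS) ht.1
    have aA : |A t - A' t| ≤ ∫ s in (0:ℝ)..t, |gA s| := by
      rw [eA]
      simpa [Real.norm_eq_abs] using intervalIntegral.norm_integral_le_integral_norm (f := gA) ht.1
    have aI : |I t - I' t| ≤ ∫ s in (0:ℝ)..t, |gI s| := by
      rw [eI]
      simpa [Real.norm_eq_abs] using intervalIntegral.norm_integral_le_integral_norm (f := gI) ht.1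
    have aL : |L t - L' t| ≤ ∫ s in (0:ℝ)..t, |gL s| := by
      rw [eL]
      simpa [Real.norm_eq_abs] using intervalIntegral.norm_integral_le_integral_norm (f := gL) ht.1
    have aR : |R t - R' t| ≤ ∫ s in (0:ℝ)..t, |gR s| := by
      rw [eR]
      simpa [Real.norm_eq_abs] using intervalIntegral.norm_integral_le_integral_norm (f := gR) ht.1
    -- sum the integrals
    have e1 := intervalIntegral.integral_add ((iiS h0T ht).abs) ((iiA h0T ht).abs)
    have e2 := intervalIntegral.integral_add (((iiS h0T ht).abs).add ((iiA h0T ht).abs))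
      ((iiI h0T ht).abs)
    have e3 := intervalIntegral.integral_add ((((iiS h0T ht).abs).add ((iiA h0T ht).abs)).add
      ((iiI h0T ht).abs)) ((iiL h0T ht).abs)
    have e4 := intervalIntegral.integral_add (((((iiS h0T ht).abs).add ((iiA h0T ht).abs)).add
      ((iiI h0T ht).abs)).add ((iiL h0T ht).abs)) ((iiR h0T ht).abs)
    rw [e3, e2, e1] at e4
    have hsum : (∫ s in (0:ℝ)..t, |gS s|) + (∫ s in (0:ℝ)..t, |gA s|) +
        (∫ s in (0:ℝ)..t, |gI s|) + (∫ s in (0:ℝ)..t, |gL s|) + (∫ s in (0:ℝ)..t, |gR s|) =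
        ∫ s in (0:ℝ)..t, (|gS s| + |gA s| + |gI s| + |gL s| + |gR s|) := e4.symm
    -- pointwise bound
    have hpw : ∀ s ∈ Icc (0:ℝ) t, |gS s| + |gA s| + |gI s| + |gL s| + |gR s| ≤ K * δ s + aa := by
      intro s hs
      have hsT : s ∈ Icc (0:ℝ) T := ⟨hs.1, hs.2.trans ht.2⟩
      have := sailr_field_diff bI bA xi σ μA μI μL lA lI lA' lI' S A I L R S' A' I' L' R'
        Cb M s hσ hμA hμI hμL hlA hlI hlA' hlI' hM (hCb s) (hb1 s hsT) (hb2 s hsT)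
      simp only [hgS, hgA, hgI, hgL, hgR, hδdef, hKdef, haadef, hM2def]
      linarith [this]
    have hmono : (∫ s in (0:ℝ)..t, (|gS s| + |gA s| + |gI s| + |gL s| + |gR s|)) ≤
        ∫ s in (0:ℝ)..t, (K * δ s + aa) := by
      apply intervalIntegral.integral_mono_on ht.1
      · exact ((((((iiS h0T ht).abs).add ((iiA h0T ht).abs)).add
          ((iiI h0T ht).abs)).add ((iiL h0T ht).abs)).add ((iiR h0T ht).abs))
      · apply ii_of_Icc _ h0T ht
        exact (hδint.const_mul K).add (integrableOn_const measure_Icc_lt_top.ne)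
      · exact hpw
    have hrhs : (∫ s in (0:ℝ)..t, (K * δ s + aa)) = K * (∫ s in (0:ℝ)..t, δ s) + aa * t := by
      rw [intervalIntegral.integral_add ((ii_of_Icc hδint h0T ht).const_mul K)
        (intervalIntegrable_const), intervalIntegral.integral_const_mul,
        intervalIntegral.integral_const]
      simp
      ring
    have haat : aa * t ≤ aa * T := mul_le_mul_of_nonneg_left ht.2 haa0
    calc δ t ≤ (∫ s in (0:ℝ)..t, |gS s|) + (∫ s in (0:ℝ)..t, |gA s|) +
        (∫ s in (0:ℝ)..t, |gI s|) + (∫ s in (0:ℝ)..t, |gL s|) + (∫ s in (0:ℝ)..t, |gR s|) := by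
          simp only [hδdef]; linarith [aS, aA, aI, aL, aR]
      _ = ∫ s in (0:ℝ)..t, (|gS s| + |gA s| + |gI s| + |gL s| + |gR s|) := hsum
      _ ≤ ∫ s in (0:ℝ)..t, (K * δ s + aa) := hmono
      _ = K * (∫ s in (0:ℝ)..t, δ s) + aa * t := hrhs
      _ ≤ aa * T + K * ∫ s in (0:ℝ)..t, δ s := by linarith
  intro t ht
  have := gronwall_int hT.le (by positivity : 0 ≤ aa * T) hK0 hδcont claim t ht
  calc δ t ≤ aa * T * Real.exp (K * t) := this
    _ ≤ aa * T * Real.exp (K * T) := by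
        apply mul_le_mul_of_nonneg_left _ (by positivity)
        exact Real.exp_le_exp.2 (mul_le_mul_of_nonneg_left ht.2 hK0)
    _ = (2*M2*(|lA - lA'| + |lI - lI'|)*T) * Real.exp (K * T) := by rw [haadef]

theorem sailr_unique (T : ℝ) (hT : 0 < T) (bI bA xi : ℝ → ℝ) (Cb : ℝ)
    (hCb : ∀ t, |bI t| ≤ Cb ∧ |bA t| ≤ Cb ∧ |xi t| ≤ Cb)
    (σ μA μI μL : ℝ)
    (hσ : 0 ≤ σ) (hμA : 0 ≤ μA) (hμI : 0 ≤ μI) (hμL : 0 ≤ μL)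
    (S0 A0 I0 L0 R0 : ℝ) (lA lI : ℝ)
    (hlA : lA ∈ Icc (0:ℝ) 1) (hlI : lI ∈ Icc (0:ℝ) 1)
    (S A I L R S' A' I' L' R' : ℝ → ℝ)
    (hsol : IsSAILRSolution T bI bA xi σ μA μI μL lA lI S0 A0 I0 L0 R0 S A I L R)
    (hsol' : IsSAILRSolution T bI bA xi σ μA μI μL lA lI S0 A0 I0 L0 R0 S' A' I' L' R') :
    ∀ t ∈ Icc (0:ℝ) T, S t = S' t ∧ A t = A' t ∧ I t = I' t ∧ L t = L' t ∧ R t = R' t := by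
  have h0T : (0:ℝ) ∈ Icc (0:ℝ) T := ⟨le_refl 0, hT.le⟩
  obtain ⟨C1, hC1⟩ := isCompact_Icc.exists_bound_of_continuousOn hsol.contS
  obtain ⟨C2, hC2⟩ := isCompact_Icc.exists_bound_of_continuousOn hsol.contA
  obtain ⟨C3, hC3⟩ := isCompact_Icc.exists_bound_of_continuousOn hsol.contI
  obtain ⟨C4, hC4⟩ := isCompact_Icc.exists_bound_of_continuousOn hsol.contL
  obtain ⟨C5, hC5⟩ := isCompact_Icc.exists_bound_of_continuousOn hsol.contR
  obtain ⟨C6, hC6⟩ := isCompact_Icc.exists_bound_of_continuousOn hsol'.contS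
  obtain ⟨C7, hC7⟩ := isCompact_Icc.exists_bound_of_continuousOn hsol'.contA
  obtain ⟨C8, hC8⟩ := isCompact_Icc.exists_bound_of_continuousOn hsol'.contI
  obtain ⟨C9, hC9⟩ := isCompact_Icc.exists_bound_of_continuousOn hsol'.contL
  obtain ⟨C10, hC10⟩ := isCompact_Icc.exists_bound_of_continuousOn hsol'.contR
  have n1 : 0 ≤ C1 := le_trans (norm_nonneg _) (hC1 0 h0T)
  have n2 : 0 ≤ C2 := le_trans (norm_nonneg _) (hC2 0 h0T)
  have n3 : 0 ≤ C3 := le_trans (norm_nonneg _) (hC3 0 h0T)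
  have n4 : 0 ≤ C4 := le_trans (norm_nonneg _) (hC4 0 h0T)
  have n5 : 0 ≤ C5 := le_trans (norm_nonneg _) (hC5 0 h0T)
  have n6 : 0 ≤ C6 := le_trans (norm_nonneg _) (hC6 0 h0T)
  have n7 : 0 ≤ C7 := le_trans (norm_nonneg _) (hC7 0 h0T)
  have n8 : 0 ≤ C8 := le_trans (norm_nonneg _) (hC8 0 h0T)
  have n9 : 0 ≤ C9 := le_trans (norm_nonneg _) (hC9 0 h0T)
  have n10 : 0 ≤ C10 := le_trans (norm_nonneg _) (hC10 0 h0T)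
  set M : ℝ := C1 + C2 + C3 + C4 + C5 + C6 + C7 + C8 + C9 + C10 with hMdef
  have hM : 0 ≤ M := by positivity
  have hb1 : ∀ t ∈ Icc (0:ℝ) T, |S t| ≤ M ∧ |A t| ≤ M ∧ |I t| ≤ M ∧ |L t| ≤ M ∧ |R t| ≤ M := by
    intro t ht
    have q1 := hC1 t ht; have q2 := hC2 t ht; have q3 := hC3 t ht
    have q4 := hC4 t ht; have q5 := hC5 t ht
    simp only [Real.norm_eq_abs] at q1 q2 q3 q4 q5
    rw [hMdef]
    exact ⟨by linarith, by linarith, by linarith, by linarith, by linarith⟩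
  have hb2 : ∀ t ∈ Icc (0:ℝ) T, |S' t| ≤ M ∧ |A' t| ≤ M ∧ |I' t| ≤ M ∧ |L' t| ≤ M ∧ |R' t| ≤ M := by
    intro t ht
    have q1 := hC6 t ht; have q2 := hC7 t ht; have q3 := hC8 t ht
    have q4 := hC9 t ht; have q5 := hC10 t ht
    simp only [Real.norm_eq_abs] at q1 q2 q3 q4 q5
    rw [hMdef]
    exact ⟨by linarith, by linarith, by linarith, by linarith, by linarith⟩
  intro t ht
  have hδ := sailr_diff T hT bI bA xi Cb hCb σ μA μI μL hσ hμA hμI hμL S0 A0 I0 L0 R0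
    lA lI lA lI hlA hlI hlA hlI S A I L R S' A' I' L' R' M hM hsol hsol' hb1 hb2 t ht
  rw [sub_self, abs_zero, sub_self, abs_zero] at hδ
  have hz : |S t - S' t| + |A t - A' t| + |I t - I' t| + |L t - L' t| + |R t - R' t| ≤ 0 := by
    calc _ ≤ _ := hδ
      _ = 0 := by ring
  have d1 := abs_nonneg (S t - S' t)
  have d2 := abs_nonneg (A t - A' t)
  have d3 := abs_nonneg (I t - I' t)
  have d4 := abs_nonneg (L t - L' t)
  have d5 := abs_nonneg (R t - R' t)
  refine ⟨?_, ?_, ?_, ?_, ?_⟩ <;>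
    [ exact sub_eq_zero.1 (abs_eq_zero.1 (le_antisymm (by linarith) d1));
      exact sub_eq_zero.1 (abs_eq_zero.1 (le_antisymm (by linarith) d2));
      exact sub_eq_zero.1 (abs_eq_zero.1 (le_antisymm (by linarith) d3));
      exact sub_eq_zero.1 (abs_eq_zero.1 (le_antisymm (by linarith) d4));
      exact sub_eq_zero.1 (abs_eq_zero.1 (le_antisymm (by linarith) d5))]

lemma sq_diff_le {a b M : ℝ} (ha : |a| ≤ M) (hb : |b| ≤ M) : |a^2 - b^2| ≤ 2*M*|a - b| := by
  have h : a^2 - b^2 = (a - b)*(a + b) := by ring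
  rw [h, abs_mul]
  have h2 : |a + b| ≤ 2*M := (abs_add_le a b).trans (by linarith)
  calc |a - b| * |a + b| ≤ |a - b| * (2*M) := mul_le_mul_of_nonneg_left h2 (abs_nonneg _)
    _ = 2*M*|a - b| := by ring

lemma costP_formula (T α0 α1 lA lI : ℝ) (A I : ℝ → ℝ)
    (hA : IntervalIntegrable (fun t => (A t)^2) volume 0 T)
    (hI2 : IntervalIntegrable (fun t => (I t)^2) volume 0 T) :
    costP T α0 α1 lA lI A I =
      α0/2 * ((∫ t in (0:ℝ)..T, (A t)^2) +
        T * (α0/2 * ((∫ t in (0:ℝ)..T, (I t)^2) + T * (α1/2*(lA^2 + lI^2))))) := by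
  unfold costP
  rw [intervalIntegral.integral_add hI2 intervalIntegrable_const,
    intervalIntegral.integral_const]
  rw [intervalIntegral.integral_add hA intervalIntegrable_const,
    intervalIntegral.integral_const]
  simp only [smul_eq_mul]
  ring

/-- Proposition 2.2: problem `(P)` has at least one solution
`(l_A^*, l_I^*)`. -/
theorem problemP_has_solution
    (T : ℝ) (hT : 0 < T) (bI bA xi : ℝ → ℝ) (hrates : RatesOK bI bA xi)
    (σ μA μI μL : ℝ)
    (hσ : 0 ≤ σ) (hμA : 0 ≤ μA) (hμI : 0 ≤ μI) (hμL : 0 ≤ μL)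
    (S0 A0 I0 L0 R0 : ℝ)
    (hS0 : 0 ≤ S0) (hA0 : 0 ≤ A0) (hI0 : 0 ≤ I0) (hL0 : 0 ≤ L0) (hR0 : 0 ≤ R0)
    (Lhat : ℝ) (hLhat : L0 < Lhat)
    (α0 α1 : ℝ) (hα0 : 0 < α0) (hα1 : 0 < α1) :
    ∃ (lA lI : ℝ) (S A I L R : ℝ → ℝ),
      AdmissibleP T bI bA xi σ μA μI μL S0 A0 I0 L0 R0 Lhat lA lI S A I L R ∧
      ∀ (lA' lI' : ℝ) (S' A' I' L' R' : ℝ → ℝ),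
        AdmissibleP T bI bA xi σ μA μI μL S0 A0 I0 L0 R0 Lhat lA' lI' S' A' I' L' R' →
        costP T α0 α1 lA lI A I ≤ costP T α0 α1 lA' lI' A' I' := by
  have hrates' := hrates
  obtain ⟨mbI, mbA, mxi, ⟨Cb, hCb⟩, hae⟩ := hrates'
  have hCb0 : 0 ≤ Cb := le_trans (abs_nonneg _) (hCb 0).1
  have h0T : (0:ℝ) ∈ Icc (0:ℝ) T := ⟨le_refl 0, hT.le⟩
  set N0 : ℝ := S0 + A0 + I0 + L0 + R0 with hN0def
  have hN00 : 0 ≤ N0 := by positivity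
  -- choose solutions for every admissible control pair
  have hex : ∀ p : ℝ × ℝ, ∃ q : (ℝ → ℝ) × (ℝ → ℝ) × (ℝ → ℝ) × (ℝ → ℝ) × (ℝ → ℝ),
      p ∈ Icc (0:ℝ) 1 ×ˢ Icc (0:ℝ) 1 →
        IsSAILRSolution T bI bA xi σ μA μI μL p.1 p.2 S0 A0 I0 L0 R0
          q.1 q.2.1 q.2.2.1 q.2.2.2.1 q.2.2.2.2 ∧
        ∀ t ∈ Icc (0:ℝ) T, 0 ≤ q.1 t ∧ 0 ≤ q.2.1 t ∧ 0 ≤ q.2.2.1 t ∧ 0 ≤ q.2.2.2.1 t ∧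
          0 ≤ q.2.2.2.2 t ∧
          q.1 t + q.2.1 t + q.2.2.1 t + q.2.2.2.1 t + q.2.2.2.2 t = N0 := by
    intro p
    by_cases hp : p ∈ Icc (0:ℝ) 1 ×ˢ Icc (0:ℝ) 1
    · obtain ⟨S, A, I, L, R, hsol, hbd⟩ := sailr_exists T hT bI bA xi hrates σ μA μI μL
        hσ hμA hμI hμL S0 A0 I0 L0 R0 hS0 hA0 hI0 hL0 hR0 p.1 p.2 hp.1 hp.2
      refine ⟨⟨S, A, I, L, R⟩, fun _ => ⟨hsol, fun t ht => ?_⟩⟩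
      obtain ⟨a, b, c, d, e, f⟩ := hbd t ht
      exact ⟨a, b, c, d, e, by rw [hN0def]; exact f⟩
    · exact ⟨⟨0, 0, 0, 0, 0⟩, fun h => absurd h hp⟩
  choose sol hsol using hex
  set SS : ℝ × ℝ → ℝ → ℝ := fun p => (sol p).1 with hSS
  set AA : ℝ × ℝ → ℝ → ℝ := fun p => (sol p).2.1 with hAA
  set II : ℝ × ℝ → ℝ → ℝ := fun p => (sol p).2.2.1 with hII
  set LL : ℝ × ℝ → ℝ → ℝ := fun p => (sol p).2.2.2.1 with hLL
  set RR : ℝ × ℝ → ℝ → ℝ := fun p => (sol p).2.2.2.2 with hRR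
  have hsolp : ∀ p, p ∈ Icc (0:ℝ) 1 ×ˢ Icc (0:ℝ) 1 →
      IsSAILRSolution T bI bA xi σ μA μI μL p.1 p.2 S0 A0 I0 L0 R0
        (SS p) (AA p) (II p) (LL p) (RR p) := fun p hp => (hsol p hp).1
  have hbdp : ∀ p, p ∈ Icc (0:ℝ) 1 ×ˢ Icc (0:ℝ) 1 → ∀ t ∈ Icc (0:ℝ) T,
      0 ≤ SS p t ∧ 0 ≤ AA p t ∧ 0 ≤ II p t ∧ 0 ≤ LL p t ∧ 0 ≤ RR p t ∧
      SS p t + AA p t + II p t + LL p t + RR p t = N0 := fun p hp => (hsol p hp).2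
  have habs : ∀ p, p ∈ Icc (0:ℝ) 1 ×ˢ Icc (0:ℝ) 1 → ∀ t ∈ Icc (0:ℝ) T,
      |SS p t| ≤ N0 ∧ |AA p t| ≤ N0 ∧ |II p t| ≤ N0 ∧ |LL p t| ≤ N0 ∧ |RR p t| ≤ N0 := by
    intro p hp t ht
    obtain ⟨a, b, c, d, e, f⟩ := hbdp p hp t ht
    rw [abs_of_nonneg a, abs_of_nonneg b, abs_of_nonneg c, abs_of_nonneg d, abs_of_nonneg e]
    exact ⟨by linarith, by linarith, by linarith, by linarith, by linarith⟩
  set M2 : ℝ := σ + μA + μI + μL + N0 + 3 with hM2def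
  set KK : ℝ := 4*Cb*M2 + 4*M2 + 2*Cb + 2*σ + 2*μA + 2*μI + 2*μL with hKKdef
  set CL : ℝ := 2*M2*T*Real.exp (KK*T) with hCLdef
  have hCL0 : 0 ≤ CL := by positivity
  have hLip : ∀ p, p ∈ Icc (0:ℝ) 1 ×ˢ Icc (0:ℝ) 1 → ∀ q, q ∈ Icc (0:ℝ) 1 ×ˢ Icc (0:ℝ) 1 →
      ∀ t ∈ Icc (0:ℝ) T,
      |SS p t - SS q t| + |AA p t - AA q t| + |II p t - II q t| + |LL p t - LL q t| +
        |RR p t - RR q t| ≤ CL * (|p.1 - q.1| + |p.2 - q.2|) := by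
    intro p hp q hq t ht
    have h := sailr_diff T hT bI bA xi Cb hCb σ μA μI μL hσ hμA hμI hμL S0 A0 I0 L0 R0
      p.1 p.2 q.1 q.2 hp.1 hp.2 hq.1 hq.2 (SS p) (AA p) (II p) (LL p) (RR p)
      (SS q) (AA q) (II q) (LL q) (RR q) N0 hN00 (hsolp p hp) (hsolp q hq)
      (habs p hp) (habs q hq) t ht
    calc _ ≤ _ := h
      _ = CL * (|p.1 - q.1| + |p.2 - q.2|) := by rw [hCLdef]; ring
  set Kset : Set (ℝ × ℝ) := {p | p ∈ Icc (0:ℝ) 1 ×ˢ Icc (0:ℝ) 1 ∧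
    ∀ t ∈ Icc (0:ℝ) T, LL p t ≤ Lhat} with hKsetdef
  have h00K : ((0:ℝ), (0:ℝ)) ∈ Icc (0:ℝ) 1 ×ˢ Icc (0:ℝ) 1 :=
    ⟨⟨le_refl 0, zero_le_one⟩, ⟨le_refl 0, zero_le_one⟩⟩
  have h00 : ((0:ℝ), (0:ℝ)) ∈ Kset := by
    refine ⟨h00K, fun t ht => ?_⟩
    have hsol0 := hsolp ((0:ℝ), (0:ℝ)) h00K
    have heqL := hsol0.eqL t ht
    have hneg : (∫ s in (0:ℝ)..t,
        dL μL ((0:ℝ),(0:ℝ)).1 ((0:ℝ),(0:ℝ)).2 (AA (0,0)) (II (0,0)) (LL (0,0)) s) ≤ 0 := by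
      have hnonneg : 0 ≤ ∫ s in (0:ℝ)..t,
          -(dL μL ((0:ℝ),(0:ℝ)).1 ((0:ℝ),(0:ℝ)).2 (AA (0,0)) (II (0,0)) (LL (0,0)) s) := by
        apply intervalIntegral.integral_nonneg ht.1
        intro u hu
        have huT : u ∈ Icc (0:ℝ) T := ⟨hu.1, hu.2.trans ht.2⟩
        have hLnn := (hbdp ((0:ℝ),(0:ℝ)) h00K u huT).2.2.2.1
        simp only [dL]
        norm_num
        exact mul_nonneg hμL hLnn
      rw [intervalIntegral.integral_neg] at hnonneg
      linarith
    calc LL (0,0) t = L0 + ∫ s in (0:ℝ)..t,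
          dL μL ((0:ℝ),(0:ℝ)).1 ((0:ℝ),(0:ℝ)).2 (AA (0,0)) (II (0,0)) (LL (0,0)) s := heqL
      _ ≤ L0 := by linarith
      _ ≤ Lhat := hLhat.le
  -- Kset is compact
  have hLLcont : ∀ t ∈ Icc (0:ℝ) T,
      ContinuousOn (fun p => LL p t) (Icc (0:ℝ) 1 ×ˢ Icc (0:ℝ) 1) := by
    intro t ht
    rw [Metric.continuousOn_iff]
    intro p hp ε hε
    refine ⟨ε/(2*CL+1), by positivity, fun q hq hd => ?_⟩
    have h5 := hLip q hq p hp t ht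
    have h1 : |q.1 - p.1| ≤ dist q p := by
      rw [← Real.dist_eq, Prod.dist_eq]; exact le_max_left _ _
    have h2 : |q.2 - p.2| ≤ dist q p := by
      rw [← Real.dist_eq, Prod.dist_eq]; exact le_max_right _ _
    have d1 := abs_nonneg (SS q t - SS p t)
    have d2 := abs_nonneg (AA q t - AA p t)
    have d3 := abs_nonneg (II q t - II p t)
    have d4 := abs_nonneg (RR q t - RR p t)
    calc dist (LL q t) (LL p t) = |LL q t - LL p t| := Real.dist_eq _ _
      _ ≤ CL * (|q.1 - p.1| + |q.2 - p.2|) := by linarith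
      _ ≤ CL * (2 * dist q p) := by
          apply mul_le_mul_of_nonneg_left _ hCL0
          linarith
      _ ≤ 2 * CL * (ε/(2*CL+1)) := by
          rw [show CL * (2 * dist q p) = 2 * CL * dist q p from by ring]
          apply mul_le_mul_of_nonneg_left hd.le (by positivity)
      _ = ε * (2*CL/(2*CL+1)) := by ring
      _ < ε * 1 := by
          apply mul_lt_mul_of_pos_left _ hε
          rw [div_lt_one (by positivity : (0:ℝ) < 2*CL+1)]
          linarith
      _ = ε := mul_one ε
  have hKsetclosed : IsClosed Kset := by
    have hKeq : Kset = ⋂ t ∈ Icc (0:ℝ) T,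
        ((Icc (0:ℝ) 1 ×ˢ Icc (0:ℝ) 1) ∩ (fun p => LL p t) ⁻¹' (Iic Lhat)) := by
      ext p
      simp only [hKsetdef, Set.mem_setOf_eq, Set.mem_iInter, Set.mem_inter_iff,
        Set.mem_preimage, Set.mem_Iic]
      constructor
      · rintro ⟨h1, h2⟩ t ht; exact ⟨h1, h2 t ht⟩
      · intro h; exact ⟨(h 0 h0T).1, fun t ht => (h t ht).2⟩
    rw [hKeq]
    apply isClosed_biInter
    intro t ht
    exact ContinuousOn.preimage_isClosed_of_isClosed (hLLcont t ht)
      (isClosed_Icc.prod isClosed_Icc) isClosed_Iic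
  have hKsetcompact : IsCompact Kset :=
    (isCompact_Icc.prod isCompact_Icc).of_isClosed_subset hKsetclosed (fun p hp => hp.1)
  -- the cost as a function of the control
  set J : ℝ × ℝ → ℝ := fun p => costP T α0 α1 p.1 p.2 (AA p) (II p) with hJdef
  have hsqA : ∀ p, p ∈ Icc (0:ℝ) 1 ×ˢ Icc (0:ℝ) 1 →
      IntervalIntegrable (fun t => (AA p t)^2) volume 0 T := by
    intro p hp
    apply ContinuousOn.intervalIntegrable
    rw [uIcc_of_le hT.le]
    exact (hsolp p hp).contA.pow 2
  have hsqI : ∀ p, p ∈ Icc (0:ℝ) 1 ×ˢ Icc (0:ℝ) 1 →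
      IntervalIntegrable (fun t => (II p t)^2) volume 0 T := by
    intro p hp
    apply ContinuousOn.intervalIntegrable
    rw [uIcc_of_le hT.le]
    exact (hsolp p hp).contI.pow 2
  set CJ : ℝ := α0/2*(2*N0*CL*T) + (α0/2*T*(α0/2))*(2*N0*CL*T) + (α0/2*T*(α0/2)*T*(α1/2))*2 + 1 with hCJdef
  have hCJ0 : 0 < CJ := by positivity
  have hJlip : ∀ p, p ∈ Kset → ∀ q, q ∈ Kset →
      |J q - J p| ≤ CJ * (|q.1 - p.1| + |q.2 - p.2|) := by
    intro p hp q hq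
    set Δ : ℝ := |q.1 - p.1| + |q.2 - p.2| with hΔdef
    have hΔ0 : 0 ≤ Δ := by positivity
    have hint : ∀ (Fq Fp : ℝ → ℝ), (∀ t ∈ Icc (0:ℝ) T, |Fq t| ≤ N0) →
        (∀ t ∈ Icc (0:ℝ) T, |Fp t| ≤ N0) →
        (∀ t ∈ Icc (0:ℝ) T, |Fq t - Fp t| ≤ CL * Δ) →
        IntervalIntegrable (fun t => (Fq t)^2) volume 0 T →
        IntervalIntegrable (fun t => (Fp t)^2) volume 0 T →
        |(∫ t in (0:ℝ)..T, (Fq t)^2) - ∫ t in (0:ℝ)..T, (Fp t)^2| ≤ 2*N0*CL*Δ*T := by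
      intro Fq Fp hFbq hFbp hFd hintq hintp
      rw [← intervalIntegral.integral_sub hintq hintp]
      have hb : ∀ x ∈ Set.uIoc (0:ℝ) T, ‖(Fq x)^2 - (Fp x)^2‖ ≤ 2*N0*(CL*Δ) := by
        intro x hx
        have hxI : x ∈ Icc (0:ℝ) T := by
          rw [uIoc_of_le hT.le] at hx
          exact ⟨hx.1.le, hx.2⟩
        rw [Real.norm_eq_abs]
        calc |(Fq x)^2 - (Fp x)^2| ≤ 2*N0*|Fq x - Fp x| :=
              sq_diff_le (hFbq x hxI) (hFbp x hxI)
          _ ≤ 2*N0*(CL*Δ) := mul_le_mul_of_nonneg_left (hFd x hxI) (by positivity)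
      calc ‖∫ t in (0:ℝ)..T, ((Fq t)^2 - (Fp t)^2)‖ ≤ 2*N0*(CL*Δ) * |T - 0| :=
            intervalIntegral.norm_integral_le_of_norm_le_const hb
        _ = 2*N0*CL*Δ*T := by rw [abs_of_nonneg (by linarith : (0:ℝ) ≤ T - 0)]; ring
    have hdA : ∀ t ∈ Icc (0:ℝ) T, |AA q t - AA p t| ≤ CL * Δ := by
      intro t ht
      have h5 := hLip q hq.1 p hp.1 t ht
      have d1 := abs_nonneg (SS q t - SS p t)
      have d3 := abs_nonneg (II q t - II p t)
      have d4 := abs_nonneg (LL q t - LL p t)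
      have d5 := abs_nonneg (RR q t - RR p t)
      rw [hΔdef]; linarith
    have hdI : ∀ t ∈ Icc (0:ℝ) T, |II q t - II p t| ≤ CL * Δ := by
      intro t ht
      have h5 := hLip q hq.1 p hp.1 t ht
      have d1 := abs_nonneg (SS q t - SS p t)
      have d2 := abs_nonneg (AA q t - AA p t)
      have d4 := abs_nonneg (LL q t - LL p t)
      have d5 := abs_nonneg (RR q t - RR p t)
      rw [hΔdef]; linarith
    have hA2 := hint (AA q) (AA p) (fun t ht => (habs q hq.1 t ht).2.1)
      (fun t ht => (habs p hp.1 t ht).2.1) hdA (hsqA q hq.1) (hsqA p hp.1)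
    have hI2 := hint (II q) (II p) (fun t ht => (habs q hq.1 t ht).2.2.1)
      (fun t ht => (habs p hp.1 t ht).2.2.1) hdI (hsqI q hq.1) (hsqI p hp.1)
    have hq1 : |q.1| ≤ 1 := abs_le.2 ⟨by linarith [hq.1.1.1], hq.1.1.2⟩
    have hq2 : |q.2| ≤ 1 := abs_le.2 ⟨by linarith [hq.1.2.1], hq.1.2.2⟩
    have hp1 : |p.1| ≤ 1 := abs_le.2 ⟨by linarith [hp.1.1.1], hp.1.1.2⟩
    have hp2 : |p.2| ≤ 1 := abs_le.2 ⟨by linarith [hp.1.2.1], hp.1.2.2⟩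
    have hZ1 : |q.1^2 - p.1^2| ≤ 2*|q.1 - p.1| := by
      have := sq_diff_le hq1 hp1; linarith
    have hZ2 : |q.2^2 - p.2^2| ≤ 2*|q.2 - p.2| := by
      have := sq_diff_le hq2 hp2; linarith
    have hZ : |(q.1^2 + q.2^2) - (p.1^2 + p.2^2)| ≤ 2*Δ := by
      have hsplit : (q.1^2 + q.2^2) - (p.1^2 + p.2^2) = (q.1^2 - p.1^2) + (q.2^2 - p.2^2) := by
        ring
      rw [hsplit, hΔdef]
      calc |(q.1^2 - p.1^2) + (q.2^2 - p.2^2)| ≤ |q.1^2 - p.1^2| + |q.2^2 - p.2^2| := abs_add_le _ _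
        _ ≤ 2*(|q.1 - p.1| + |q.2 - p.2|) := by linarith
    have hfq := costP_formula T α0 α1 q.1 q.2 (AA q) (II q) (hsqA q hq.1) (hsqI q hq.1)
    have hfp := costP_formula T α0 α1 p.1 p.2 (AA p) (II p) (hsqA p hp.1) (hsqI p hp.1)
    have hdec : J q - J p =
        α0/2*((∫ t in (0:ℝ)..T, (AA q t)^2) - ∫ t in (0:ℝ)..T, (AA p t)^2)
        + (α0/2*T*(α0/2))*((∫ t in (0:ℝ)..T, (II q t)^2) - ∫ t in (0:ℝ)..T, (II p t)^2)
        + (α0/2*T*(α0/2)*T*(α1/2))*((q.1^2 + q.2^2) - (p.1^2 + p.2^2)) := by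
      show costP T α0 α1 q.1 q.2 (AA q) (II q) - costP T α0 α1 p.1 p.2 (AA p) (II p) = _
      rw [hfq, hfp]; ring
    have habs3 := abs_add3
      (α0/2*((∫ t in (0:ℝ)..T, (AA q t)^2) - ∫ t in (0:ℝ)..T, (AA p t)^2))
      ((α0/2*T*(α0/2))*((∫ t in (0:ℝ)..T, (II q t)^2) - ∫ t in (0:ℝ)..T, (II p t)^2))
      ((α0/2*T*(α0/2)*T*(α1/2))*((q.1^2 + q.2^2) - (p.1^2 + p.2^2)))
    rw [hdec]
    refine habs3.trans ?_
    have b1 : |α0/2 * ((∫ t in (0:ℝ)..T, (AA q t)^2) - ∫ t in (0:ℝ)..T, (AA p t)^2)| ≤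
        α0/2 * (2*N0*CL*Δ*T) := by
      rw [abs_mul, abs_of_nonneg (show (0:ℝ) ≤ α0/2 by positivity)]
      exact mul_le_mul_of_nonneg_left hA2 (by positivity)
    have b2 : |(α0/2*T*(α0/2)) * ((∫ t in (0:ℝ)..T, (II q t)^2) - ∫ t in (0:ℝ)..T, (II p t)^2)| ≤
        (α0/2*T*(α0/2)) * (2*N0*CL*Δ*T) := by
      rw [abs_mul, abs_of_nonneg (show (0:ℝ) ≤ α0/2*T*(α0/2) by positivity)]
      exact mul_le_mul_of_nonneg_left hI2 (by positivity)
    have b3 : |(α0/2*T*(α0/2)*T*(α1/2)) * ((q.1^2 + q.2^2) - (p.1^2 + p.2^2))| ≤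
        (α0/2*T*(α0/2)*T*(α1/2)) * (2*Δ) := by
      rw [abs_mul, abs_of_nonneg (show (0:ℝ) ≤ α0/2*T*(α0/2)*T*(α1/2) by positivity)]
      exact mul_le_mul_of_nonneg_left hZ (by positivity)
    calc _ ≤ α0/2 * (2*N0*CL*Δ*T) + (α0/2*T*(α0/2)) * (2*N0*CL*Δ*T) +
          (α0/2*T*(α0/2)*T*(α1/2)) * (2*Δ) := by linarith
      _ ≤ CJ * Δ := by rw [hCJdef]; linarith [hΔ0]
      _ = CJ * (|q.1 - p.1| + |q.2 - p.2|) := by rw [hΔdef]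
  have hJcont : ContinuousOn J Kset := by
    rw [Metric.continuousOn_iff]
    intro p hp ε hε
    refine ⟨ε/(2*CJ), by positivity, fun q hq hd => ?_⟩
    have h1 : |q.1 - p.1| ≤ dist q p := by
      rw [← Real.dist_eq, Prod.dist_eq]; exact le_max_left _ _
    have h2 : |q.2 - p.2| ≤ dist q p := by
      rw [← Real.dist_eq, Prod.dist_eq]; exact le_max_right _ _
    calc dist (J q) (J p) = |J q - J p| := Real.dist_eq _ _
      _ ≤ CJ * (|q.1 - p.1| + |q.2 - p.2|) := hJlip p hp q hq
      _ ≤ CJ * (2 * dist q p) := by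
          apply mul_le_mul_of_nonneg_left _ hCJ0.le
          linarith
      _ < CJ * (2 * (ε/(2*CJ))) := by
          apply mul_lt_mul_of_pos_left _ hCJ0
          linarith
      _ = ε := by field_simp
  -- minimize
  obtain ⟨pstar, hpK, hmin⟩ := hKsetcompact.exists_isMinOn ⟨((0:ℝ),(0:ℝ)), h00⟩ hJcont
  refine ⟨pstar.1, pstar.2, SS pstar, AA pstar, II pstar, LL pstar, RR pstar,
    ⟨hpK.1.1, hpK.1.2, hsolp pstar hpK.1,
      fun t ht => ⟨(hbdp pstar hpK.1 t ht).2.2.2.1, hpK.2 t ht⟩⟩, ?_⟩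
  intro lA' lI' S' A' I' L' R' hadm
  obtain ⟨hl1, hl2, hsol', hcon'⟩ := hadm
  have hpK' : ((lA', lI') : ℝ × ℝ) ∈ Icc (0:ℝ) 1 ×ˢ Icc (0:ℝ) 1 := ⟨hl1, hl2⟩
  have huniq := sailr_unique T hT bI bA xi Cb hCb σ μA μI μL hσ hμA hμI hμL S0 A0 I0 L0 R0
    lA' lI' hl1 hl2 (SS (lA', lI')) (AA (lA', lI')) (II (lA', lI')) (LL (lA', lI'))
    (RR (lA', lI')) S' A' I' L' R' (hsolp (lA', lI') hpK') hsol'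
  have hmem : ((lA', lI') : ℝ × ℝ) ∈ Kset := by
    refine ⟨hpK', fun t ht => ?_⟩
    rw [(huniq t ht).2.2.2.1]
    exact (hcon' t ht).2
  have hJle : J pstar ≤ J (lA', lI') := isMinOn_iff.1 hmin _ hmem
  have hsqA' : IntervalIntegrable (fun t => (A' t)^2) volume 0 T := by
    apply ContinuousOn.intervalIntegrable
    rw [uIcc_of_le hT.le]
    exact hsol'.contA.pow 2
  have hsqI' : IntervalIntegrable (fun t => (I' t)^2) volume 0 T := by
    apply ContinuousOn.intervalIntegrable
    rw [uIcc_of_le hT.le]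
    exact hsol'.contI.pow 2
  have hcosteq : J (lA', lI') = costP T α0 α1 lA' lI' A' I' := by
    have hf1 := costP_formula T α0 α1 lA' lI' (AA (lA', lI')) (II (lA', lI'))
      (hsqA (lA', lI') hpK') (hsqI (lA', lI') hpK')
    have hf2 := costP_formula T α0 α1 lA' lI' A' I' hsqA' hsqI'
    have hAc : (∫ t in (0:ℝ)..T, (AA (lA', lI') t)^2) = ∫ t in (0:ℝ)..T, (A' t)^2 := by
      apply intervalIntegral.integral_congr
      rw [uIcc_of_le hT.le]
      intro t ht
      show (AA (lA', lI') t)^2 = (A' t)^2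
      rw [(huniq t ht).2.1]
    have hIc : (∫ t in (0:ℝ)..T, (II (lA', lI') t)^2) = ∫ t in (0:ℝ)..T, (I' t)^2 := by
      apply intervalIntegral.integral_congr
      rw [uIcc_of_le hT.le]
      intro t ht
      show (II (lA', lI') t)^2 = (I' t)^2
      rw [(huniq t ht).2.2.1]
    show costP T α0 α1 lA' lI' (AA (lA', lI')) (II (lA', lI')) = _
    rw [hf1, hf2, hAc, hIc]
  rw [← hcosteq]
  exact hJle

end
end

section
/- (From the proof of Proposition 2.4) Under the hypotheses of Proposition 2.4, the penalized quantity satisfies (α_2/(2ε))∫_0^T ((L_ε*(t) − L̂)^+)² dt ≤ C uniformly in ε; consequently (L_ε* − L̂)^+ → 0 strongly in L²(0,T) as ε → 0, and the limit state satisfies L*(t) ≤ L̂ for all t ∈ [0,T]. -/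
open MeasureTheory Set Filter Topology intervalIntegral
open scoped NNReal

noncomputable section

/-- The adapted approximating cost functional of problem `(P_ε)`. -/
def costPeps (T α0 α1 α2 ε Lhat lAstar lIstar lA lI : ℝ) (A I L : ℝ → ℝ) : ℝ :=
  costP T α0 α1 lA lI A I +
    α2 / (2 * ε) * ∫ t in (0:ℝ)..T, (max (L t - Lhat) 0) ^ 2 +
    1 / 2 * (lA - lAstar) ^ 2 + 1 / 2 * (lI - lIstar) ^ 2

/-- Admissibility for the approximating problem `(P_ε)`: controls in `[0,1]` and the state
solves the SAILR system (no state constraint). -/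
def AdmissiblePeps (T : ℝ) (bI bA xi : ℝ → ℝ) (σ μA μI μL : ℝ)
    (S0 A0 I0 L0 R0 : ℝ) (lA lI : ℝ) (S A I L R : ℝ → ℝ) : Prop :=
  lA ∈ Icc (0:ℝ) 1 ∧ lI ∈ Icc (0:ℝ) 1 ∧
    IsSAILRSolution T bI bA xi σ μA μI μL lA lI S0 A0 I0 L0 R0 S A I L R
/-- from the proof of Proposition 2.4: the penalized quantity
`(α₂/(2ε)) ∫₀ᵀ ((L_ε^*(t) − L̂)⁺)² dt` is bounded uniformly in `ε`; consequently
`(L_ε^* − L̂)⁺ → 0` strongly in `L²(0,T)` and the limit state satisfies `L^*(t) ≤ L̂`. -/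
theorem penalization_vanishes
    (T : ℝ) (hT : 0 < T) (bI bA xi : ℝ → ℝ) (hrates : RatesOK bI bA xi)
    (σ μA μI μL : ℝ)
    (hσ : 0 ≤ σ) (hμA : 0 ≤ μA) (hμI : 0 ≤ μI) (hμL : 0 ≤ μL)
    (S0 A0 I0 L0 R0 : ℝ)
    (hS0 : 0 ≤ S0) (hA0 : 0 ≤ A0) (hI0 : 0 ≤ I0) (hL0 : 0 ≤ L0) (hR0 : 0 ≤ R0)
    (Lhat : ℝ) (hLhat : L0 < Lhat)
    (α0 α1 α2 : ℝ) (hα0 : 0 < α0) (hα1 : 0 < α1) (hα2 : 0 < α2)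
    -- the optimal pair of `(P)` with its state
    (lAstar lIstar : ℝ) (Sstar Astar Istar Lstar Rstar : ℝ → ℝ)
    (hadm : AdmissibleP T bI bA xi σ μA μI μL S0 A0 I0 L0 R0 Lhat lAstar lIstar
      Sstar Astar Istar Lstar Rstar)
    (hopt : ∀ (lA' lI' : ℝ) (S' A' I' L' R' : ℝ → ℝ),
      AdmissibleP T bI bA xi σ μA μI μL S0 A0 I0 L0 R0 Lhat lA' lI' S' A' I' L' R' →
      costP T α0 α1 lAstar lIstar Astar Istar ≤ costP T α0 α1 lA' lI' A' I')
    -- a family of optimal pairs of `(P_ε)` with their states, for `ε > 0`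
    (lAe lIe : ℝ → ℝ) (Se Ae Ie Le Re : ℝ → ℝ → ℝ)
    (hadme : ∀ ε > (0:ℝ), AdmissiblePeps T bI bA xi σ μA μI μL S0 A0 I0 L0 R0
      (lAe ε) (lIe ε) (Se ε) (Ae ε) (Ie ε) (Le ε) (Re ε))
    (hopte : ∀ ε > (0:ℝ), ∀ (lA' lI' : ℝ) (S' A' I' L' R' : ℝ → ℝ),
      AdmissiblePeps T bI bA xi σ μA μI μL S0 A0 I0 L0 R0 lA' lI' S' A' I' L' R' →
      costPeps T α0 α1 α2 ε Lhat lAstar lIstar (lAe ε) (lIe ε) (Ae ε) (Ie ε) (Le ε) ≤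
        costPeps T α0 α1 α2 ε Lhat lAstar lIstar lA' lI' A' I' L') :
    (∃ C : ℝ, ∀ ε > (0:ℝ),
      α2 / (2 * ε) * ∫ t in (0:ℝ)..T, (max (Le ε t - Lhat) 0) ^ 2 ≤ C) ∧
    Tendsto (fun ε => ∫ t in (0:ℝ)..T, (max (Le ε t - Lhat) 0) ^ 2) (𝓝[>] (0:ℝ)) (𝓝 0) ∧
    ∀ t ∈ Icc (0:ℝ) T, Lstar t ≤ Lhat := by
  obtain ⟨hlA, hlI, hsol, hconstr⟩ := hadm
  set C := costP T α0 α1 lAstar lIstar Astar Istar with hCdef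
  -- key uniform bound
  have key : ∀ ε > (0:ℝ),
      α2 / (2 * ε) * ∫ t in (0:ℝ)..T, (max (Le ε t - Lhat) 0) ^ 2 ≤ C := by
    intro ε hε
    obtain ⟨-, -, hsole⟩ := hadme ε hε
    have h := hopte ε hε lAstar lIstar Sstar Astar Istar Lstar Rstar ⟨hlA, hlI, hsol⟩
    have hzero : (∫ t in (0:ℝ)..T, ((max (Lstar t - Lhat) 0) ^ 2 +
        1 / 2 * (lAstar - lAstar) ^ 2 + 1 / 2 * (lIstar - lIstar) ^ 2)) = 0 := by
      have heq : EqOn (fun t => (max (Lstar t - Lhat) 0) ^ 2 +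
          1 / 2 * (lAstar - lAstar) ^ 2 + 1 / 2 * (lIstar - lIstar) ^ 2)
          (fun _ => (0:ℝ)) (Set.uIcc 0 T) := by
        intro t ht
        rw [Set.uIcc_of_le hT.le] at ht
        have h2 : Lstar t - Lhat ≤ 0 := sub_nonpos.mpr (hconstr t ht).2
        simp [max_eq_right h2]
      rw [intervalIntegral.integral_congr heq]
      simp
    unfold costPeps at h
    rw [hzero, mul_zero, add_zero] at h
    -- nonnegativity of the cost of the ε-optimal pair
    have hinner : 0 ≤ ∫ t in (0:ℝ)..T,
        ((Ie ε t) ^ 2 + α1 / 2 * ((lAe ε) ^ 2 + (lIe ε) ^ 2)) :=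
      intervalIntegral.integral_nonneg hT.le (fun u _ => by positivity)
    have hcost_nn : 0 ≤ costP T α0 α1 (lAe ε) (lIe ε) (Ae ε) (Ie ε) := by
      unfold costP
      refine mul_nonneg (by positivity)
        (intervalIntegral.integral_nonneg hT.le fun u _ => ?_)
      have h0 : (0:ℝ) ≤ α0 / 2 := by positivity
      nlinarith [sq_nonneg (Ae ε u), mul_nonneg h0 hinner]
    -- the penalty integral dominates the pure max-integral
    have hLc : ContinuousOn (Le ε) (Set.uIcc 0 T) := by
      rw [Set.uIcc_of_le hT.le]; exact hsole.contL
    have hmaxc : ContinuousOn (fun t => (max (Le ε t - Lhat) 0) ^ 2) (Set.uIcc 0 T) :=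
      ((hLc.sub continuousOn_const).sup continuousOn_const).pow 2
    have hfi : IntervalIntegrable (fun t => (max (Le ε t - Lhat) 0) ^ 2)
        volume 0 T := hmaxc.intervalIntegrable
    have hgi : IntervalIntegrable (fun t => (max (Le ε t - Lhat) 0) ^ 2 +
        1 / 2 * (lAe ε - lAstar) ^ 2 + 1 / 2 * (lIe ε - lIstar) ^ 2) volume 0 T :=
      (((hmaxc.add continuousOn_const).add continuousOn_const)).intervalIntegrable
    have hPQ := intervalIntegral.integral_mono_on hT.le hfi hgi
      (fun x _ => by nlinarith [sq_nonneg (lAe ε - lAstar), sq_nonneg (lIe ε - lIstar)])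
    have hmul := mul_le_mul_of_nonneg_left hPQ
      (le_of_lt (show (0:ℝ) < α2 / (2 * ε) by positivity))
    linarith [h, hcost_nn, hmul, hCdef]
  refine ⟨⟨C, key⟩, ?_, fun t ht => (hconstr t ht).2⟩
  -- the penalty integral tends to 0
  have hlow : ∀ ε ∈ Ioi (0:ℝ),
      (0:ℝ) ≤ ∫ t in (0:ℝ)..T, (max (Le ε t - Lhat) 0) ^ 2 := fun ε _ =>
    intervalIntegral.integral_nonneg hT.le (fun u _ => sq_nonneg _)
  have hup : ∀ ε ∈ Ioi (0:ℝ),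
      (∫ t in (0:ℝ)..T, (max (Le ε t - Lhat) 0) ^ 2) ≤ 2 * C / α2 * ε := by
    intro ε hε
    have hε' : (0:ℝ) < ε := hε
    have hpos : (0:ℝ) < α2 / (2 * ε) := by positivity
    have hk := key ε hε'
    have : (∫ t in (0:ℝ)..T, (max (Le ε t - Lhat) 0) ^ 2) ≤ C / (α2 / (2 * ε)) := by
      rw [le_div_iff₀ hpos, mul_comm]
      exact hk
    refine this.trans_eq ?_
    field_simp
  have hzero : Tendsto (fun ε : ℝ => 2 * C / α2 * ε) (𝓝[>] (0:ℝ)) (𝓝 0) := by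
    have hc : Continuous (fun ε : ℝ => 2 * C / α2 * ε) := continuous_const.mul continuous_id
    have := (hc.tendsto (0:ℝ)).mono_left (nhdsWithin_le_nhds (s := Ioi (0:ℝ)))
    simpa using this
  refine tendsto_of_tendsto_of_tendsto_of_le_of_le' tendsto_const_nhds hzero ?_ ?_
  · filter_upwards [self_mem_nhdsWithin] with ε hε using hlow ε hε
  · filter_upwards [self_mem_nhdsWithin] with ε hε using hup ε hε

end
end
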